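/- arXiv:1812.01903 — 9 statements merged into one kernel-verified Lean document; each statement's English description precedes it below -/
import Mathlib

section
/- For every integer n ≥ 1 and every real number μ with 0 ≤ μ ≤ 1, the tail of the exponential series satisfies ∑_{k=n}^∞ (μn)^k / k! ≤ (μe)^n. -/
/-- Tail bound for the exponential series: for `n ≥ 1` and `0 ≤ μ ≤ 1`,
`∑_{k=n}^∞ (μn)^k / k! ≤ (μe)^n`. -/
theorem stmt_0 (n : ℕ) (hn : 1 ≤ n) (μ : ℝ) (hμ0 : 0 ≤ μ) (hμ1 : μ ≤ 1) :
    ∑' k : ℕ, (μ * n) ^ (k + n) / (Nat.factorial (k + n) : ℝ) ≤ (μ * Real.exp 1) ^ n := by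
  have hinj : Function.Injective (fun k : ℕ => k + n) := fun a b h => by simpa using h
  have hsum : Summable (fun m : ℕ => (n : ℝ) ^ m / Nat.factorial m) :=
    Real.summable_pow_div_factorial n
  have hsum' : Summable (fun k : ℕ => (n : ℝ) ^ (k + n) / Nat.factorial (k + n)) :=
    hsum.comp_injective hinj
  -- pointwise bound
  have hpt : ∀ k : ℕ, (μ * n) ^ (k + n) / (Nat.factorial (k + n) : ℝ)
      ≤ μ ^ n * ((n : ℝ) ^ (k + n) / Nat.factorial (k + n)) := by
    intro k
    rw [mul_pow, mul_div_assoc]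
    gcongr ?_ * _
    · exact pow_le_pow_of_le_one hμ0 hμ1 (Nat.le_add_left n k)
  have hsumf : Summable (fun k : ℕ => (μ * n) ^ (k + n) / (Nat.factorial (k + n) : ℝ)) := by
    apply Summable.of_nonneg_of_le (fun k => by positivity) hpt
    exact hsum'.mul_left _
  calc ∑' k : ℕ, (μ * n) ^ (k + n) / (Nat.factorial (k + n) : ℝ)
      ≤ ∑' k : ℕ, μ ^ n * ((n : ℝ) ^ (k + n) / Nat.factorial (k + n)) :=
        Summable.tsum_le_tsum hpt hsumf (hsum'.mul_left _)
    _ = μ ^ n * ∑' k : ℕ, (n : ℝ) ^ (k + n) / Nat.factorial (k + n) := tsum_mul_left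
    _ ≤ μ ^ n * ∑' m : ℕ, (n : ℝ) ^ m / Nat.factorial m := by
        gcongr _ * ?_
        · exact Summable.tsum_le_tsum_of_inj _ hinj (fun c _ => by positivity)
            (fun k => le_rfl) hsum' hsum
    _ = μ ^ n * Real.exp n := by
        rw [Real.exp_eq_exp_ℝ, NormedSpace.exp_eq_tsum_div]
    _ = (μ * Real.exp 1) ^ n := by
        rw [mul_pow, ← Real.exp_nat_mul, mul_one]
end

section
/- For every integer n ≥ 1 and every real number μ ≥ 1, the partial sum of the exponential series satisfies ∑_{k=0}^{n-1} (μn)^k / k! ≤ e · (μe)^{n-1}. -/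
/-- Partial-sum bound for the exponential series: for `n ≥ 1` and `μ ≥ 1`,
`∑_{k=0}^{n-1} (μn)^k / k! ≤ e · (μe)^{n-1}`. -/
theorem stmt_1 (n : ℕ) (hn : 1 ≤ n) (μ : ℝ) (hμ : 1 ≤ μ) :
    ∑ k ∈ Finset.range n, (μ * n) ^ k / (Nat.factorial k : ℝ) ≤
      Real.exp 1 * (μ * Real.exp 1) ^ (n - 1) := by
  have hμ0 : (0:ℝ) ≤ μ := zero_le_one.trans hμ
  have h1 : ∑ k ∈ Finset.range n, (μ * n) ^ k / (Nat.factorial k : ℝ)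
      ≤ μ ^ (n-1) * ∑ k ∈ Finset.range n, (n:ℝ) ^ k / (Nat.factorial k : ℝ) := by
    rw [Finset.mul_sum]
    apply Finset.sum_le_sum
    intro k hk
    rw [mul_pow, mul_div_assoc]
    exact mul_le_mul_of_nonneg_right
      (pow_le_pow_right₀ hμ (Nat.le_sub_one_of_lt (Finset.mem_range.mp hk)))
      (by positivity)
  have h2 : ∑ k ∈ Finset.range n, (n:ℝ)^k / (Nat.factorial k : ℝ) ≤ Real.exp n :=
    Real.sum_le_exp_of_nonneg (by positivity) n
  calc ∑ k ∈ Finset.range n, (μ * n) ^ k / (Nat.factorial k : ℝ)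
      ≤ μ ^ (n-1) * Real.exp n := h1.trans (mul_le_mul_of_nonneg_left h2 (by positivity))
    _ = Real.exp 1 * (μ * Real.exp 1) ^ (n - 1) := by
        have h3 : Real.exp ↑n = Real.exp 1 * Real.exp 1 ^ (n - 1) := by
          rw [← Real.exp_one_pow, ← pow_succ', Nat.sub_add_cancel hn]
        rw [h3, mul_pow]
        ring
end

section
/- For all integers n, n' ≥ 1 and every real number t ≥ 0, the product of the exponential partial sums satisfies (∑_{i=0}^{n-1} t^i / i!) · (∑_{j=0}^{n'-1} t^j / j!) ≤ ∑_{k=0}^{n+n'-2} (2t)^k / k!. Equivalently, if X and Y are independent random variables with Gamma distributions of shape parameters n and n' and scale 1, then P(X ≥ t, Y ≥ t) ≤ e^{-2t} ∑_{k=0}^{n+n'-2} (2t)^k / k!. -/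
lemma aux_antidiag (k : ℕ) (t : ℝ) :
    ∑ i ∈ Finset.range (k + 1),
      t ^ i / (Nat.factorial i : ℝ) * (t ^ (k - i) / (Nat.factorial (k - i) : ℝ))
      = (2 * t) ^ k / (Nat.factorial k : ℝ) := by
  rw [two_mul, add_pow, Finset.sum_div]
  refine Finset.sum_congr rfl fun i hi => ?_
  have hik : i ≤ k := Nat.lt_succ_iff.mp (Finset.mem_range.mp hi)
  rw [Nat.cast_choose ℝ hik]
  have h1 : (Nat.factorial i : ℝ) ≠ 0 := Nat.cast_ne_zero.mpr (Nat.factorial_ne_zero i)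
  have h2 : (Nat.factorial (k - i) : ℝ) ≠ 0 := Nat.cast_ne_zero.mpr (Nat.factorial_ne_zero _)
  have h3 : (Nat.factorial k : ℝ) ≠ 0 := Nat.cast_ne_zero.mpr (Nat.factorial_ne_zero k)
  field_simp

/-- For `n, n' ≥ 1` and `t ≥ 0`,
`(∑_{i=0}^{n-1} t^i/i!) · (∑_{j=0}^{n'-1} t^j/j!) ≤ ∑_{k=0}^{n+n'-2} (2t)^k/k!`. -/
theorem stmt_2 (n n' : ℕ) (hn : 1 ≤ n) (hn' : 1 ≤ n') (t : ℝ) (ht : 0 ≤ t) :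
    (∑ i ∈ Finset.range n, t ^ i / (Nat.factorial i : ℝ)) *
      (∑ j ∈ Finset.range n', t ^ j / (Nat.factorial j : ℝ)) ≤
    ∑ k ∈ Finset.range (n + n' - 1), (2 * t) ^ k / (Nat.factorial k : ℝ) := by
  set N := n + n' - 1 with hN
  have key : ∑ k ∈ Finset.range N, (2 * t) ^ k / (Nat.factorial k : ℝ)
      = ∑ p ∈ (Finset.range N ×ˢ Finset.range N).filter (fun p => p.1 + p.2 < N),
          t ^ p.1 / (Nat.factorial p.1 : ℝ) * (t ^ p.2 / (Nat.factorial p.2 : ℝ)) := by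
    have hA : (Finset.range N ×ˢ Finset.range N).filter (fun p => p.1 + p.2 < N)
        = (Finset.range N).biUnion (fun k => Finset.HasAntidiagonal.antidiagonal k) := by
      ext ⟨i, j⟩
      simp only [Finset.mem_filter, Finset.mem_product, Finset.mem_range,
        Finset.mem_biUnion, Finset.HasAntidiagonal.mem_antidiagonal]
      constructor
      · rintro ⟨⟨hi, hj⟩, h⟩; exact ⟨i + j, h, rfl⟩
      · rintro ⟨k, hk, rfl⟩; omega
    have hdisj : ∀ k ∈ Finset.range N, ∀ k' ∈ Finset.range N, k ≠ k' →
        Disjoint (Finset.HasAntidiagonal.antidiagonal k) (Finset.HasAntidiagonal.antidiagonal k') := by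
      intro k _ k' _ hkk'
      simp only [Finset.disjoint_left, Finset.HasAntidiagonal.mem_antidiagonal]
      intro p h1 h2; omega
    rw [hA, Finset.sum_biUnion hdisj]
    refine Finset.sum_congr rfl fun k _ => ?_
    rw [Finset.Nat.sum_antidiagonal_eq_sum_range_succ_mk, aux_antidiag]
  rw [Finset.sum_mul_sum, ← Finset.sum_product', key]
  refine Finset.sum_le_sum_of_subset_of_nonneg ?_ ?_
  · intro ⟨i, j⟩ hij
    simp only [Finset.mem_product, Finset.mem_range] at hij
    simp only [Finset.mem_filter, Finset.mem_product, Finset.mem_range]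
    omega
  · intro p _ _
    positivity
end

section
/- Let I₁ denote the modified Bessel function of the first kind of order one, defined by the everywhere-convergent power series I₁(u) = ∑_{m=0}^∞ (1/(m!(m+1)!)) (u/2)^{2m+1}. Then for all real numbers u, v with 0 < u < v, one has I₁(v) ≤ (v/u) e^{v-u} I₁(u). -/
/-- The modified Bessel function of the first kind of order one, defined by its
everywhere-convergent power series. -/
noncomputable def besselI1 (u : ℝ) : ℝ :=
  ∑' m : ℕ, (1 / ((Nat.factorial m : ℝ) * (Nat.factorial (m + 1) : ℝ))) * (u / 2) ^ (2 * m + 1)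

noncomputable def bA (m : ℕ) : ℝ :=
  1 / ((Nat.factorial m : ℝ) * (Nat.factorial (m + 1) : ℝ) * 2 ^ (2 * m + 1))

lemma bA_pos (m : ℕ) : 0 < bA m := by
  unfold bA; positivity

lemma pow_even_nonneg (t : ℝ) (m : ℕ) : 0 ≤ t ^ (2 * m) := by
  rw [pow_mul]; positivity

lemma summable_g (t : ℝ) : Summable fun m => bA m * t ^ (2 * m) := by
  apply Summable.of_nonneg_of_le
    (fun m => mul_nonneg (bA_pos m).le (pow_even_nonneg t m))
    (f := fun m => (t ^ 2) ^ m / (Nat.factorial m : ℝ))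
  · intro m
    rw [pow_mul, div_eq_mul_one_div, mul_comm]
    apply mul_le_mul_of_nonneg_left _ (by positivity)
    unfold bA
    rw [div_le_div_iff₀ (by positivity) (by positivity)]
    have h1 : (1:ℝ) ≤ (Nat.factorial (m+1) : ℝ) := by exact_mod_cast Nat.one_le_iff_ne_zero.2 (Nat.factorial_ne_zero _)
    have h2 : (1:ℝ) ≤ (2:ℝ) ^ (2*m+1) := one_le_pow₀ (by norm_num)
    have h3 : (0:ℝ) < (Nat.factorial m : ℝ) := by exact_mod_cast Nat.factorial_pos m
    have h4 : (1:ℝ) ≤ (Nat.factorial (m+1):ℝ) * 2 ^ (2*m+1) := by nlinarith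
    nlinarith [mul_le_mul_of_nonneg_left h4 h3.le]
  · exact Real.summable_pow_div_factorial (t ^ 2)

noncomputable def bG (t : ℝ) : ℝ := ∑' m, bA m * t ^ (2 * m)

lemma besselI1_eq (t : ℝ) : besselI1 t = t * bG t := by
  unfold besselI1 bG
  rw [← tsum_mul_left]
  congr 1; funext m
  unfold bA
  rw [div_pow, pow_succ t (2 * m)]
  field_simp

/-- the termwise derivative -/
noncomputable def bD (m : ℕ) (t : ℝ) : ℝ := bA m * (↑(2 * m) * t ^ (2 * m - 1))

lemma bD_hasDerivAt (m : ℕ) (y : ℝ) :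
    HasDerivAt (fun x => bA m * x ^ (2 * m)) (bD m y) y :=
  (hasDerivAt_pow (2 * m) y).const_mul (bA m)

lemma bD_bound (R : ℝ) (hR : 1 ≤ R) (m : ℕ) (y : ℝ) (hy : |y| ≤ R) :
    ‖bD m y‖ ≤ 2 * (R ^ 2) ^ m / (Nat.factorial m : ℝ) := by
  unfold bD
  rcases Nat.eq_zero_or_pos m with hm | hm
  · subst hm; simp
  · have h0 : (0:ℝ) < R := lt_of_lt_of_le one_pos hR
    have h1 : ‖bD m y‖ ≤ bA m * (↑(2 * m) * R ^ (2 * m - 1)) := by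
      unfold bD
      rw [Real.norm_eq_abs, abs_mul, abs_mul, abs_of_nonneg (bA_pos m).le,
        abs_of_nonneg (by positivity : (0:ℝ) ≤ (↑(2*m):ℝ)), abs_pow]
      apply mul_le_mul_of_nonneg_left _ (bA_pos m).le
      apply mul_le_mul_of_nonneg_left _ (by positivity : (0:ℝ) ≤ (↑(2*m):ℝ))
      exact pow_le_pow_left₀ (abs_nonneg y) hy _
    refine h1.trans ?_
    have hm2 : 2 * m - 1 ≤ 2 * m := Nat.sub_le _ _
    have hRpow : R ^ (2 * m - 1) ≤ R ^ (2 * m) := pow_le_pow_right₀ hR hm2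
    have hA : bA m * ↑(2 * m) ≤ 2 / (Nat.factorial m : ℝ) := by
      unfold bA
      have hfm : (0:ℝ) < (Nat.factorial m : ℝ) := by exact_mod_cast Nat.factorial_pos m
      have hfm1 : (0:ℝ) < (Nat.factorial (m+1) : ℝ) := by exact_mod_cast Nat.factorial_pos (m+1)
      have hp : (1:ℝ) ≤ (2:ℝ) ^ (2*m+1) := one_le_pow₀ (by norm_num)
      have hmf : (m : ℝ) ≤ (Nat.factorial (m+1) : ℝ) := by
        exact_mod_cast (Nat.self_le_factorial m).trans
          (Nat.factorial_le (Nat.le_succ m))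
      rw [div_mul_eq_mul_div, div_le_div_iff₀ (by positivity) hfm]
      push_cast
      nlinarith [mul_pos hfm hfm1, mul_pos (mul_pos hfm hfm1) (lt_of_lt_of_le one_pos hp)]
    calc bA m * (↑(2 * m) * R ^ (2 * m - 1)) = (bA m * ↑(2 * m)) * R ^ (2 * m - 1) := by ring
      _ ≤ (2 / (Nat.factorial m : ℝ)) * R ^ (2 * m) := by
          apply mul_le_mul hA hRpow (by positivity) (by positivity)
      _ = 2 * (R ^ 2) ^ m / (Nat.factorial m : ℝ) := by
          rw [← pow_mul]; ring

lemma bG_hasDerivAt (R : ℝ) (hR : 1 ≤ R) (y : ℝ) (hy : y ∈ Set.Ioo (-R) R) :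
    HasDerivAt bG (∑' m, bD m y) y := by
  have hU : Summable fun m => 2 * (R ^ 2) ^ m / (Nat.factorial m : ℝ) := by
    simpa [mul_div_assoc] using (Real.summable_pow_div_factorial (R ^ 2)).mul_left 2
  have h0 : (0:ℝ) ∈ Set.Ioo (-R) R := by
    constructor <;> nlinarith
  exact hasDerivAt_tsum_of_isPreconnected hU isOpen_Ioo isPreconnected_Ioo
    (fun m x _ => bD_hasDerivAt m x)
    (fun m x hx => bD_bound R hR m x (abs_le.2 ⟨hx.1.le, hx.2.le⟩))
    h0 (summable_g 0) hy

/-- auxiliary comparison sequence -/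
noncomputable def bE (t : ℝ) : ℕ → ℝ
  | 0 => 0
  | (k+1) => 2 * ((k:ℝ)+1)^2 * bA (k+1) * t ^ (2*k)

lemma stepA (t : ℝ) (m : ℕ) :
    bD m t ≤ (1/2) * (bA m * t ^ (2*m)) + bE t m := by
  cases m with
  | zero => simp [bD, bE]; nlinarith [bA_pos 0]
  | succ k =>
    show bA (k+1) * (↑(2 * (k+1)) * t ^ (2*(k+1) - 1)) ≤ _
    have h1 : 2*(k+1) - 1 = 2*k + 1 := by omega
    have h2 : 2*(k+1) = 2*k + 2 := by omega
    rw [h1, h2, pow_succ, pow_add]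
    show _ ≤ (1/2) * (bA (k+1) * (t^(2*k) * t^2)) + 2 * ((k:ℝ)+1)^2 * bA (k+1) * t^(2*k)
    push_cast
    nlinarith [mul_nonneg (mul_nonneg (bA_pos (k+1)).le (pow_even_nonneg t k))
      (sq_nonneg (t - 2*((k:ℝ)+1)))]

lemma stepB (t : ℝ) (m : ℕ) :
    bE t (m+1) ≤ (1/2) * (bA m * t ^ (2*m)) := by
  show 2 * ((m:ℝ)+1)^2 * bA (m+1) * t ^ (2*m) ≤ _
  have hco : 2 * ((m:ℝ)+1)^2 * bA (m+1) ≤ (1/2) * bA m := by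
    unfold bA
    have hF : (0:ℝ) < (Nat.factorial m : ℝ) := by exact_mod_cast Nat.factorial_pos m
    have hP : (0:ℝ) < (2:ℝ) ^ (2*m+1) := by positivity
    have e1 : (Nat.factorial (m+1) : ℝ) = ((m:ℝ)+1) * m.factorial := by
      exact_mod_cast Nat.factorial_succ m
    have e2 : (Nat.factorial (m+1+1) : ℝ) = ((m:ℝ)+2) * Nat.factorial (m+1) := by
      push_cast [Nat.factorial_succ (m+1)]; ring
    have e3 : (2:ℝ) ^ (2*(m+1)+1) = 2 ^ (2*m+1) * 4 := by
      rw [show 2*(m+1)+1 = (2*m+1)+2 from by ring, pow_add]; norm_num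
    rw [e2, e1, e3, mul_one_div, mul_one_div,
      div_le_div_iff₀ (by positivity) (by positivity)]
    nlinarith [mul_nonneg (mul_nonneg (sq_nonneg ((m:ℝ)+1)) (mul_pos hF hF).le)
      (mul_pos hP hP).le, mul_pos (mul_pos hF hF) (mul_pos hP hP)]
  calc 2 * ((m:ℝ)+1)^2 * bA (m+1) * t ^ (2*m)
      ≤ ((1/2) * bA m) * t ^ (2*m) :=
        mul_le_mul_of_nonneg_right hco (pow_even_nonneg t m)
    _ = (1/2) * (bA m * t ^ (2*m)) := by ring

lemma bE_nonneg (t : ℝ) (m : ℕ) : 0 ≤ bE t m := by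
  cases m with
  | zero => simp [bE]
  | succ k =>
    show (0:ℝ) ≤ 2 * ((k:ℝ)+1)^2 * bA (k+1) * t ^ (2*k)
    have := bA_pos (k+1)
    have := pow_even_nonneg t k
    positivity

lemma key (t : ℝ) (hd : Summable fun m => bD m t) : (∑' m, bD m t) ≤ bG t := by
  have Sh : Summable fun m => (1/2) * (bA m * t ^ (2*m)) := (summable_g t).mul_left _
  have Ses : Summable fun m => bE t (m+1) :=
    Summable.of_nonneg_of_le (fun m => bE_nonneg t (m+1)) (stepB t) Sh
  have Se : Summable (bE t) := (summable_nat_add_iff 1).mp Ses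
  have h1 : (∑' m, bD m t) ≤ ∑' m, ((1/2) * (bA m * t ^ (2*m)) + bE t m) :=
    Summable.tsum_le_tsum (stepA t) hd (Sh.add Se)
  have h2 : (∑' m, ((1/2) * (bA m * t ^ (2*m)) + bE t m))
      = (∑' m, (1/2) * (bA m * t ^ (2*m))) + ∑' m, bE t m := Summable.tsum_add Sh Se
  have h3 : (∑' m, bE t m) = ∑' m, bE t (m+1) := by
    rw [Summable.tsum_eq_zero_add Se]; simp [bE]
  have h4 : (∑' m, bE t (m+1)) ≤ ∑' m, (1/2) * (bA m * t ^ (2*m)) :=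
    Summable.tsum_le_tsum (stepB t) Ses Sh
  have h5 : (∑' m, (1/2) * (bA m * t ^ (2*m))) = (1/2) * bG t := tsum_mul_left
  linarith

lemma bF_antitone (u v : ℝ) (hu : 0 < u) (huv : u < v) :
    Real.exp (-v) * bG v ≤ Real.exp (-u) * bG u := by
  set R : ℝ := v + 1 with hR
  have hR1 : 1 ≤ R := by nlinarith
  have hsub : Set.Icc u v ⊆ Set.Ioo (-R) R := by
    intro x hx
    constructor <;> [nlinarith [hx.1]; nlinarith [hx.2]]
  have hF : ∀ y ∈ Set.Ioo (-R) R,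
      HasDerivAt (fun t => Real.exp (-t) * bG t)
        (Real.exp (-y) * (∑' m, bD m y) - Real.exp (-y) * bG y) y := by
    intro y hy
    have he : HasDerivAt (fun t : ℝ => Real.exp (-t)) (-Real.exp (-y)) y := by
      simpa [Function.comp_def] using (Real.hasDerivAt_exp (-y)).comp y (hasDerivAt_neg y)
    have : HasDerivAt (fun t => Real.exp (-t) * bG t)
        (-Real.exp (-y) * bG y + Real.exp (-y) * ∑' m, bD m y) y :=
      he.mul (bG_hasDerivAt R hR1 y hy)
    convert this using 1
    ring
  have hanti : AntitoneOn (fun t => Real.exp (-t) * bG t) (Set.Icc u v) := by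
    apply antitoneOn_of_deriv_nonpos (convex_Icc u v)
    · intro x hx
      exact ((hF x (hsub hx)).differentiableAt.continuousAt).continuousWithinAt
    · intro x hx
      rw [interior_Icc] at hx
      exact ((hF x (hsub (Set.Ioo_subset_Icc_self hx))).differentiableAt).differentiableWithinAt
    · intro x hx
      rw [interior_Icc] at hx
      have hx' := hsub (Set.Ioo_subset_Icc_self hx)
      rw [(hF x hx').deriv]
      have hdsum : Summable fun m => bD m x := by
        have hU : Summable fun m => 2 * (R ^ 2) ^ m / (Nat.factorial m : ℝ) := by
          simpa [mul_div_assoc] using (Real.summable_pow_div_factorial (R ^ 2)).mul_left 2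
        exact hU.of_norm_bounded (fun m => bD_bound R hR1 m x (abs_le.2 ⟨hx'.1.le, hx'.2.le⟩))
      have := key x hdsum
      have hexp : 0 < Real.exp (-x) := Real.exp_pos _
      nlinarith
  exact hanti (Set.left_mem_Icc.2 huv.le) (Set.right_mem_Icc.2 huv.le) huv.le

/-- For `0 < u < v`, `I₁(v) ≤ (v/u) e^{v−u} I₁(u)`. -/
theorem stmt_3 (u v : ℝ) (hu : 0 < u) (huv : u < v) :
    besselI1 v ≤ (v / u) * Real.exp (v - u) * besselI1 u := by
  have h := bF_antitone u v hu huv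
  have hv : 0 < v := hu.trans huv
  have hGv : bG v ≤ Real.exp (v - u) * bG u := by
    have hev : (0:ℝ) < Real.exp v := Real.exp_pos v
    have := mul_le_mul_of_nonneg_left h hev.le
    calc bG v = Real.exp v * (Real.exp (-v) * bG v) := by
          rw [← mul_assoc, ← Real.exp_add]; simp
      _ ≤ Real.exp v * (Real.exp (-u) * bG u) := this
      _ = Real.exp (v - u) * bG u := by rw [← mul_assoc, ← Real.exp_add]; ring_nf
  rw [besselI1_eq, besselI1_eq]
  have : v * bG v ≤ v * (Real.exp (v - u) * bG u) :=
    mul_le_mul_of_nonneg_left hGv hv.le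
  calc v * bG v ≤ v * (Real.exp (v - u) * bG u) := this
    _ = (v / u) * Real.exp (v - u) * (u * bG u) := by field_simp
end

section
/- There exists a constant C > 0 such that for every real number v ≥ 1, one has ∑_{n=2}^∞ v^n / ((n-1)!(n-2)!) ≤ C · v^{9/4} · e^{2√v}. -/
lemma fact_bound (n : ℕ) :
    (Nat.factorial (2 * n + 1) : ℝ) ≤ 2 ^ (2 * n + 1) *
      ((Nat.factorial (n + 1) : ℝ) * (Nat.factorial n : ℝ)) := by
  have h : Nat.factorial (2 * n + 1) ≤ 2 ^ (2 * n + 1) *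
      (Nat.factorial (n + 1) * Nat.factorial n) := by
    induction n with
    | zero => simp [Nat.factorial]
    | succ m ih =>
      have e1 : 2 * (m + 1) + 1 = (2 * m + 1) + 2 := by ring
      rw [e1]
      have : Nat.factorial ((2 * m + 1) + 2) =
          ((2 * m + 3) * (2 * m + 2)) * Nat.factorial (2 * m + 1) := by
        rw [Nat.factorial_succ, Nat.factorial_succ]; ring
      rw [this]
      calc ((2 * m + 3) * (2 * m + 2)) * Nat.factorial (2 * m + 1)
          ≤ ((2 * m + 3) * (2 * m + 2)) *
            (2 ^ (2 * m + 1) * (Nat.factorial (m + 1) * Nat.factorial m)) :=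
            Nat.mul_le_mul_left _ ih
        _ ≤ 2 ^ ((2 * m + 1) + 2) * (Nat.factorial (m + 1 + 1) * Nat.factorial (m + 1)) := by
            rw [Nat.factorial_succ (m+1), Nat.factorial_succ m]
            have hq : (2 * m + 3) * (2 * m + 2) ≤ 4 * ((m + 2) * (m + 1)) := by nlinarith
            calc ((2 * m + 3) * (2 * m + 2)) *
                  (2 ^ (2 * m + 1) * (Nat.factorial (m + 1) * Nat.factorial m))
                ≤ (4 * ((m + 2) * (m + 1))) *
                  (2 ^ (2 * m + 1) * (Nat.factorial (m + 1) * Nat.factorial m)) :=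
                  Nat.mul_le_mul_right _ hq
              _ = 2 ^ ((2 * m + 1) + 2) *
                  ((m + 2) * Nat.factorial (m + 1) * ((m + 1) * Nat.factorial m)) := by ring
  exact_mod_cast h

/-- There is `C > 0` such that for all `v ≥ 1`,
`∑_{n=2}^∞ v^n/((n−1)!(n−2)!) ≤ C v^{9/4} e^{2√v}`. -/
theorem stmt_5 : ∃ C : ℝ, 0 < C ∧ ∀ v : ℝ, 1 ≤ v →
    ∑' n : ℕ, v ^ (n + 2) / ((Nat.factorial (n + 1) : ℝ) * (Nat.factorial n : ℝ)) ≤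
      C * v ^ (9 / 4 : ℝ) * Real.exp (2 * Real.sqrt v) := by
  refine ⟨1, one_pos, fun v hv => ?_⟩
  set x := Real.sqrt v with hxdef
  have hv0 : (0:ℝ) ≤ v := le_trans zero_le_one hv
  have hx0 : (0:ℝ) ≤ x := Real.sqrt_nonneg v
  have hx2 : x ^ 2 = v := Real.sq_sqrt hv0
  -- comparison series g n = x^3 * (2x)^(2n+1)/(2n+1)!
  set g : ℕ → ℝ := fun n => x ^ 3 * ((2 * x) ^ (2 * n + 1) / (Nat.factorial (2 * n + 1) : ℝ))
  have hfg : ∀ n : ℕ,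
      v ^ (n + 2) / ((Nat.factorial (n + 1) : ℝ) * (Nat.factorial n : ℝ)) ≤ g n := by
    intro n
    have hfac : (0:ℝ) < (Nat.factorial (n + 1) : ℝ) * (Nat.factorial n : ℝ) := by
      positivity
    have hfac2 : (0:ℝ) < (Nat.factorial (2 * n + 1) : ℝ) := by positivity
    have hnum : v ^ (n + 2) = x ^ 3 * x ^ (2 * n + 1) := by
      rw [← hx2]; ring
    have hg : g n = x ^ 3 * x ^ (2 * n + 1) *
        (2 ^ (2 * n + 1) / (Nat.factorial (2 * n + 1) : ℝ)) := by
      simp only [g, mul_pow]; ring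
    have key := fact_bound n
    have hxp : (0:ℝ) ≤ x ^ 3 * x ^ (2 * n + 1) := by positivity
    rw [hnum, hg, mul_div_assoc', div_le_div_iff₀ hfac hfac2]
    nlinarith [mul_le_mul_of_nonneg_left key hxp]
  -- summability
  have hsum_exp : Summable (fun n : ℕ => (2 * x) ^ n / (Nat.factorial n : ℝ)) :=
    Real.summable_pow_div_factorial (2 * x)
  have hinj : Function.Injective (fun n : ℕ => 2 * n + 1) := fun a b h => by simp only [] at h; omega
  have hsumg0 : Summable (fun n : ℕ => (2 * x) ^ (2 * n + 1) / (Nat.factorial (2 * n + 1) : ℝ)) :=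
    hsum_exp.comp_injective hinj
  have hsumg : Summable g := hsumg0.mul_left _
  have hf_nonneg : ∀ n : ℕ, 0 ≤ v ^ (n + 2) / ((Nat.factorial (n + 1) : ℝ) * (Nat.factorial n : ℝ)) := by
    intro n; positivity
  have hsumf : Summable (fun n : ℕ =>
      v ^ (n + 2) / ((Nat.factorial (n + 1) : ℝ) * (Nat.factorial n : ℝ))) :=
    Summable.of_nonneg_of_le hf_nonneg hfg hsumg
  have step1 : ∑' n : ℕ, v ^ (n + 2) / ((Nat.factorial (n + 1) : ℝ) * (Nat.factorial n : ℝ)) ≤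
      ∑' n, g n := Summable.tsum_le_tsum hfg hsumf hsumg
  -- ∑ g ≤ x^3 * exp (2x)
  have hexp : Real.exp (2 * x) = ∑' n : ℕ, (2 * x) ^ n / (Nat.factorial n : ℝ) := by
    rw [Real.exp_eq_exp_ℝ, NormedSpace.exp_eq_tsum (𝕂 := ℝ)]
    simp [smul_eq_mul, div_eq_inv_mul]
  have step2 : ∑' n, g n ≤ x ^ 3 * Real.exp (2 * x) := by
    rw [show (∑' n, g n) = x ^ 3 * ∑' n, (2 * x) ^ (2 * n + 1) / (Nat.factorial (2 * n + 1) : ℝ)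
      from tsum_mul_left, hexp]
    refine mul_le_mul_of_nonneg_left ?_ (by positivity)
    refine Summable.tsum_le_tsum_of_inj (fun n : ℕ => 2 * n + 1) hinj (fun c _ => by positivity)
      (fun n => le_refl _) hsumg0 hsum_exp
  -- x^3 ≤ v^(9/4)
  have step3 : x ^ 3 ≤ v ^ (9 / 4 : ℝ) := by
    have : x ^ 3 = v ^ (3 / 2 : ℝ) := by
      rw [hxdef, Real.sqrt_eq_rpow, ← Real.rpow_natCast (v ^ (1/2 : ℝ)) 3,
        ← Real.rpow_mul hv0]
      norm_num
    rw [this]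
    exact Real.rpow_le_rpow_of_exponent_le hv (by norm_num)
  calc ∑' n : ℕ, v ^ (n + 2) / ((Nat.factorial (n + 1) : ℝ) * (Nat.factorial n : ℝ))
      ≤ x ^ 3 * Real.exp (2 * x) := le_trans step1 step2
    _ ≤ v ^ (9 / 4 : ℝ) * Real.exp (2 * x) :=
        mul_le_mul_of_nonneg_right step3 (Real.exp_pos _).le
    _ = 1 * v ^ (9 / 4 : ℝ) * Real.exp (2 * Real.sqrt v) := by rw [one_mul]
end

section
/- Let I₁ denote the modified Bessel function of the first kind of order one, defined by the power series I₁(u) = ∑_{m=0}^∞ (1/(m!(m+1)!)) (u/2)^{2m+1}. For every a > 0 there exists a constant C = C(a) > 0 such that for all reals t > 0, λ ≥ a·t, and r with 1 < r < λ/2, the tail of the zero-dimensional Bessel transition density satisfies ∫_λ^∞ (r/t) exp(−(r² + x²)/(2t)) I₁(r x / t) dx ≤ C √r · e^{λ r / t} · (1/λ) · e^{−λ²/(2t)}. -/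
open Real Finset MeasureTheory Filter Set

lemma cb_sq (n : ℕ) : ((n:ℝ)+1) * (Nat.centralBinom n : ℝ)^2 ≤ 16 ^ n := by
  induction n with
  | zero => simp [Nat.centralBinom]
  | succ n ih =>
    set A : ℝ := (Nat.centralBinom n : ℝ) with hA
    set B : ℝ := (Nat.centralBinom (n+1) : ℝ) with hB
    have hrec : ((n:ℝ)+1) * B = 2*(2*(n:ℝ)+1) * A := by
      rw [hA, hB]; exact_mod_cast congrArg (fun k : ℕ => (k : ℝ)) (Nat.succ_mul_centralBinom_succ n)
    have e1 : (((n:ℝ)+1) * B)^2 = (2*(2*(n:ℝ)+1) * A)^2 := by rw [hrec]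
    have h16 : (0:ℝ) ≤ (16:ℝ)^n := by positivity
    have key : ((n:ℝ)+1)^3 * ((((n:ℝ)+1)+1) * B^2) ≤ ((n:ℝ)+1)^3 * (16^(n+1)) := by
      calc ((n:ℝ)+1)^3 * ((((n:ℝ)+1)+1) * B^2)
          = (4*((n:ℝ)+2)*(2*(n:ℝ)+1)^2) * (((n:ℝ)+1) * A^2) := by
            linear_combination (((n:ℝ)+1)*((n:ℝ)+2)) * e1
        _ ≤ (4*((n:ℝ)+2)*(2*(n:ℝ)+1)^2) * 16^n :=
            mul_le_mul_of_nonneg_left ih (by positivity)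
        _ ≤ (16*((n:ℝ)+1)^3) * 16^n := by
            have hc : (4*((n:ℝ)+2)*(2*(n:ℝ)+1)^2) ≤ 16*((n:ℝ)+1)^3 := by nlinarith [sq_nonneg ((n:ℝ))]
            exact mul_le_mul_of_nonneg_right hc h16
        _ = ((n:ℝ)+1)^3 * (16^(n+1)) := by rw [pow_succ]; ring
    have := le_of_mul_le_mul_left key (by positivity : (0:ℝ) < ((n:ℝ)+1)^3)
    push_cast
    convert this using 2 <;> push_cast <;> ring


-- m * C(2m,m) * C(2m+1,m) ≤ 2^(4m+1)
lemma choose_prod_le (m : ℕ) :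
    (m:ℝ) * (Nat.choose (2*m) m : ℝ) * (Nat.choose (2*m+1) m : ℝ) ≤ 2^(4*m+1) := by
  have hcb : (Nat.centralBinom m : ℝ) = (Nat.choose (2*m) m : ℝ) := by
    rw [Nat.centralBinom]
  have hsym : Nat.choose (2*m+1) m = Nat.choose (2*m+1) (m+1) := by
    rw [← Nat.choose_symm (by omega : m+1 ≤ 2*m+1)]
    congr 1; omega
  have hrel : ((2*(m:ℝ)+1)) * (Nat.choose (2*m) m : ℝ)
      = (Nat.choose (2*m+1) (m+1) : ℝ) * ((m:ℝ)+1) := by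
    exact_mod_cast congrArg (fun k : ℕ => (k : ℝ)) (Nat.add_one_mul_choose_eq (2*m) m)
  set A : ℝ := (Nat.choose (2*m) m : ℝ) with hA
  set B : ℝ := (Nat.choose (2*m+1) m : ℝ) with hBdef
  have hB2 : B * ((m:ℝ)+1) = (2*(m:ℝ)+1) * A := by
    rw [hBdef, hsym]; linarith [hrel]
  have hcb2 := cb_sq m
  rw [hcb] at hcb2
  have hm1 : (0:ℝ) < (m:ℝ)+1 := by positivity
  have key : (((m:ℝ)) * A * B) * ((m:ℝ)+1) ≤ (2^(4*m+1)) * ((m:ℝ)+1) := by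
    have e : ((m:ℝ) * A * B) * ((m:ℝ)+1) = (m:ℝ)*(2*(m:ℝ)+1) * A^2 := by
      linear_combination ((m:ℝ)*A) * hB2
    rw [e]
    have h1 : (m:ℝ)*(2*(m:ℝ)+1) * A^2 ≤ 2*((m:ℝ)+1) * (((m:ℝ)+1) * A^2) := by
      nlinarith [sq_nonneg A]
    have h2 : 2*((m:ℝ)+1) * (((m:ℝ)+1) * A^2) ≤ 2*((m:ℝ)+1) * 16^m := by
      have := cb_sq m; rw [hcb] at this
      exact mul_le_mul_of_nonneg_left this (by positivity)
    have h3 : 2*((m:ℝ)+1) * 16^m = (2^(4*m+1)) * ((m:ℝ)+1) := by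
      rw [pow_succ']
      rw [show (16:ℝ) = 2^4 by norm_num, ← pow_mul]
      ring
    linarith
  exact le_of_mul_le_mul_right key hm1

-- C(2n+2,n+1) * (2n+3)! ≤ 2^(4n+5) * n! * (n+2)!
lemma key_binom (n : ℕ) :
    (Nat.choose (2*n+2) (n+1) : ℝ) * (Nat.factorial (2*n+3) : ℝ)
      ≤ 2^(4*n+5) * (Nat.factorial n : ℝ) * (Nat.factorial (n+2) : ℝ) := by
  have hfact : (Nat.factorial (2*n+3) : ℝ)
      = (Nat.choose (2*n+3) (n+1) : ℝ) * (Nat.factorial (n+1) : ℝ) * (Nat.factorial (n+2) : ℝ) := by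
    have h := Nat.choose_mul_factorial_mul_factorial (by omega : n+1 ≤ 2*n+3)
    have h2 : (2*n+3) - (n+1) = n+2 := by omega
    rw [h2] at h
    exact_mod_cast (congrArg (fun k : ℕ => (k : ℝ)) h).symm
  have hcp := choose_prod_le (n+1)
  have e1 : 2*(n+1) = 2*n+2 := by omega
  have e2 : 2*(n+1)+1 = 2*n+3 := by omega
  have e3 : 4*(n+1)+1 = 4*n+5 := by omega
  rw [e2, e1, e3] at hcp
  -- hcp : (n+1) * C(2n+2,n+1) * C(2n+3,n+1) ≤ 2^(4n+5)
  have hfac1 : (Nat.factorial (n+1) : ℝ) = ((n:ℝ)+1) * (Nat.factorial n : ℝ) := by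
    push_cast [Nat.factorial_succ]; ring
  rw [hfact, hfac1]
  have hnn : (0:ℝ) ≤ (Nat.factorial n : ℝ) * (Nat.factorial (n+2) : ℝ) := by positivity
  calc (Nat.choose (2*n+2) (n+1) : ℝ) * ((Nat.choose (2*n+3) (n+1) : ℝ) * (((n:ℝ)+1) * (Nat.factorial n : ℝ)) * (Nat.factorial (n+2) : ℝ))
      = ((((n:ℝ)+1)) * (Nat.choose (2*n+2) (n+1) : ℝ) * (Nat.choose (2*n+3) (n+1) : ℝ)) * ((Nat.factorial n : ℝ) * (Nat.factorial (n+2) : ℝ)) := by ring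
    _ ≤ (2^(4*n+5)) * ((Nat.factorial n : ℝ) * (Nat.factorial (n+2) : ℝ)) := by
        apply mul_le_mul_of_nonneg_right _ hnn
        refine le_of_eq_of_le ?_ hcp
        push_cast; ring
    _ = 2^(4*n+5) * (Nat.factorial n : ℝ) * (Nat.factorial (n+2) : ℝ) := by ring

noncomputable def bterm (u : ℝ) (m : ℕ) : ℝ :=
  (1 / ((Nat.factorial m : ℝ) * (Nat.factorial (m + 1) : ℝ))) * (u / 2) ^ (2 * m + 1)

lemma bterm_nonneg {u : ℝ} (hu : 0 ≤ u) (m : ℕ) : 0 ≤ bterm u m := by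
  unfold bterm; positivity

lemma summable_bterm {u : ℝ} (hu : 0 ≤ u) : Summable (bterm u) := by
  refine Summable.of_nonneg_of_le (bterm_nonneg hu) ?_
    ((Real.summable_pow_div_factorial ((u/2)^2)).mul_left (u/2))
  · intro m
    unfold bterm
    rw [pow_succ]
    have h1 : (1:ℝ) / ((Nat.factorial m : ℝ) * (Nat.factorial (m + 1) : ℝ))
        ≤ 1 / (Nat.factorial m : ℝ) := by
      apply div_le_div_of_nonneg_left one_pos.le (by positivity)
      nth_rewrite 1 [← mul_one (Nat.factorial m : ℝ)]
      apply mul_le_mul_of_nonneg_left _ (by positivity)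
      exact_mod_cast Nat.one_le_iff_ne_zero.mpr (Nat.factorial_ne_zero (m+1))
    calc 1 / ((Nat.factorial m : ℝ) * (Nat.factorial (m + 1) : ℝ)) * ((u/2)^(2*m) * (u/2))
        ≤ 1 / (Nat.factorial m : ℝ) * ((u/2)^(2*m) * (u/2)) := by
          apply mul_le_mul_of_nonneg_right h1 (by positivity)
      _ = (u/2) * (((u/2)^2)^m / (Nat.factorial m : ℝ)) := by
          rw [← pow_mul]; ring

lemma besselI1_nonneg {u : ℝ} (hu : 0 ≤ u) : 0 ≤ besselI1 u :=
  tsum_nonneg (bterm_nonneg hu)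

-- the coefficient bound: for k ≤ n,
lemma coeff_eq (n k : ℕ) (hk : k ≤ n) :
    (1:ℝ) / ((Nat.factorial k : ℝ) * (Nat.factorial (k+1) : ℝ))
      * (1 / ((Nat.factorial (n-k) : ℝ) * (Nat.factorial (n-k+1) : ℝ)))
    = (Nat.choose n k : ℝ) * (Nat.choose (n+2) (n+1-k) : ℝ)
      / ((Nat.factorial n : ℝ) * (Nat.factorial (n+2) : ℝ)) := by
  have h1 : (Nat.choose n k : ℝ) * (Nat.factorial k : ℝ) * (Nat.factorial (n-k) : ℝ)
      = (Nat.factorial n : ℝ) := by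
    exact_mod_cast congrArg (fun j : ℕ => (j:ℝ)) (Nat.choose_mul_factorial_mul_factorial hk)
  have hk2 : n+1-k ≤ n+2 := by omega
  have h2' := Nat.choose_mul_factorial_mul_factorial hk2
  have he : (n+2) - (n+1-k) = k+1 := by omega
  rw [he] at h2'
  have h2 : (Nat.choose (n+2) (n+1-k) : ℝ) * (Nat.factorial (n+1-k) : ℝ) * (Nat.factorial (k+1) : ℝ)
      = (Nat.factorial (n+2) : ℝ) := by exact_mod_cast congrArg (fun j : ℕ => (j:ℝ)) h2'
  have he2 : n-k+1 = n+1-k := by omega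
  rw [he2]
  have f1 : (0:ℝ) < (Nat.factorial k : ℝ) := by exact_mod_cast Nat.factorial_pos k
  have f2 : (0:ℝ) < (Nat.factorial (k+1) : ℝ) := by exact_mod_cast Nat.factorial_pos (k+1)
  have f3 : (0:ℝ) < (Nat.factorial (n-k) : ℝ) := by exact_mod_cast Nat.factorial_pos (n-k)
  have f4 : (0:ℝ) < (Nat.factorial (n+1-k) : ℝ) := by exact_mod_cast Nat.factorial_pos (n+1-k)
  have f5 : (0:ℝ) < (Nat.factorial n : ℝ) := by exact_mod_cast Nat.factorial_pos n
  have f6 : (0:ℝ) < (Nat.factorial (n+2) : ℝ) := by exact_mod_cast Nat.factorial_pos (n+2)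
  field_simp
  nlinarith [h1, h2, mul_pos f1 f3, mul_pos f2 f4]

lemma besselI1_sq_le {u : ℝ} (hu : 0 < u) : u * (besselI1 u)^2 ≤ Real.exp (2*u) := by
  have hsum := summable_bterm hu.le
  have hnorm : Summable (fun m => ‖bterm u m‖) := by
    simpa [Real.norm_of_nonneg (bterm_nonneg hu.le _)] using hsum
  have hcauchy : (besselI1 u) * (besselI1 u)
      = ∑' n, ∑ kl ∈ Finset.HasAntidiagonal.antidiagonal n, bterm u kl.1 * bterm u kl.2 := by
    rw [besselI1]
    exact tsum_mul_tsum_eq_tsum_sum_antidiagonal_of_summable_norm hnorm hnorm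
  have hS : Summable (fun n => ∑ kl ∈ Finset.HasAntidiagonal.antidiagonal n, bterm u kl.1 * bterm u kl.2) :=
    summable_sum_mul_antidiagonal_of_summable_norm' hnorm hsum hnorm hsum
  have hexp : Real.exp (2*u) = ∑' n : ℕ, (2*u)^n / (Nat.factorial n : ℝ) := by
    rw [Real.exp_eq_exp_ℝ, NormedSpace.exp_eq_tsum_div]
  -- termwise bound
  have hterm : ∀ n : ℕ, u * (∑ kl ∈ Finset.HasAntidiagonal.antidiagonal n, bterm u kl.1 * bterm u kl.2)
      ≤ (2*u)^(2*n+3) / (Nat.factorial (2*n+3) : ℝ) := by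
    intro n
    have hsumn : (∑ kl ∈ Finset.HasAntidiagonal.antidiagonal n, bterm u kl.1 * bterm u kl.2)
        = ∑ k ∈ Finset.range (n+1), bterm u k * bterm u (n - k) :=
      Finset.Nat.sum_antidiagonal_eq_sum_range_succ_mk _ n
    have hval : ∀ k ∈ Finset.range (n+1), bterm u k * bterm u (n-k)
        = ((Nat.choose n k : ℝ) * (Nat.choose (n+2) (n+1-k) : ℝ)
            / ((Nat.factorial n : ℝ) * (Nat.factorial (n+2) : ℝ))) * (u/2)^(2*n+2) := by
      intro k hk
      have hkn : k ≤ n := by simpa using Nat.lt_succ_iff.mp (Finset.mem_range.mp hk)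
      unfold bterm
      have hpow : (u/2)^(2*k+1) * (u/2)^(2*(n-k)+1) = (u/2)^(2*n+2) := by
        rw [← pow_add]; congr 1; omega
      calc (1 / ((Nat.factorial k : ℝ) * (Nat.factorial (k + 1) : ℝ))) * (u/2)^(2*k+1)
            * ((1 / ((Nat.factorial (n-k) : ℝ) * (Nat.factorial (n-k+1) : ℝ))) * (u/2)^(2*(n-k)+1))
          = ((1:ℝ) / ((Nat.factorial k : ℝ) * (Nat.factorial (k+1) : ℝ))
              * (1 / ((Nat.factorial (n-k) : ℝ) * (Nat.factorial (n-k+1) : ℝ))))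
            * ((u/2)^(2*k+1) * (u/2)^(2*(n-k)+1)) := by ring
        _ = ((Nat.choose n k : ℝ) * (Nat.choose (n+2) (n+1-k) : ℝ)
            / ((Nat.factorial n : ℝ) * (Nat.factorial (n+2) : ℝ))) * (u/2)^(2*n+2) := by
            rw [coeff_eq n k hkn, hpow]
    rw [hsumn, Finset.sum_congr rfl hval, ← Finset.sum_mul, ← Finset.sum_div]
    -- now bound the choose-sum by C(2n+2, n+1)
    have hchoose : (∑ k ∈ Finset.range (n+1), (Nat.choose n k : ℝ) * (Nat.choose (n+2) (n+1-k) : ℝ))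
        ≤ (Nat.choose (2*n+2) (n+1) : ℝ) := by
      have hv := Nat.add_choose_eq n (n+2) (n+1)
      have hv2 : (n + (n+2)).choose (n+1)
          = ∑ k ∈ Finset.range (n+1+1), Nat.choose n k * Nat.choose (n+2) (n+1-k) := by
        rw [hv, Finset.Nat.sum_antidiagonal_eq_sum_range_succ_mk]
      have hmono : ∑ k ∈ Finset.range (n+1), Nat.choose n k * Nat.choose (n+2) (n+1-k)
          ≤ ∑ k ∈ Finset.range (n+1+1), Nat.choose n k * Nat.choose (n+2) (n+1-k) :=
        Finset.sum_le_sum_of_subset (Finset.range_subset_range.mpr (by omega))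
      have : ∑ k ∈ Finset.range (n+1), Nat.choose n k * Nat.choose (n+2) (n+1-k)
          ≤ (2*n+2).choose (n+1) := by
        rw [show 2*n+2 = n + (n+2) from by omega, hv2]; exact hmono
      exact_mod_cast this
    have hfp : (0:ℝ) < (Nat.factorial n : ℝ) * (Nat.factorial (n+2) : ℝ) := by positivity
    have hfp3 : (0:ℝ) < (Nat.factorial (2*n+3) : ℝ) := by
      exact_mod_cast Nat.factorial_pos (2*n+3)
    have hup : (0:ℝ) < (u/2)^(2*n+2) := by positivity
    -- reduce to key_binom
    have hkey := key_binom n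
    set S : ℝ := ∑ k ∈ Finset.range (n+1), (Nat.choose n k : ℝ) * (Nat.choose (n+2) (n+1-k) : ℝ) with hSdef
    have goal_eq : u * (S / ((Nat.factorial n : ℝ) * (Nat.factorial (n+2) : ℝ)) * (u/2)^(2*n+2))
        = (u * (S * (u/2)^(2*n+2))) / ((Nat.factorial n : ℝ) * (Nat.factorial (n+2) : ℝ)) := by ring
    rw [goal_eq, div_le_div_iff₀ hfp hfp3]
    have lhs_eq : u * (S * (u/2)^(2*n+2)) * (Nat.factorial (2*n+3) : ℝ)
        = (S * (Nat.factorial (2*n+3) : ℝ)) * (u^(2*n+3) / 2^(2*n+2)) := by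
      rw [div_pow, pow_succ u (2*n+2)]
      ring
    have rhs_eq : (2*u)^(2*n+3) * ((Nat.factorial n : ℝ) * (Nat.factorial (n+2) : ℝ))
        = (2^(4*n+5) * (Nat.factorial n : ℝ) * (Nat.factorial (n+2) : ℝ)) * (u^(2*n+3) / 2^(2*n+2)) := by
      rw [mul_pow]
      rw [show (4*n+5) = (2*n+3) + (2*n+2) from by omega, pow_add]
      field_simp
      ring
    rw [lhs_eq, rhs_eq]
    apply mul_le_mul_of_nonneg_right _ (by positivity)
    calc S * (Nat.factorial (2*n+3) : ℝ)
        ≤ (Nat.choose (2*n+2) (n+1) : ℝ) * (Nat.factorial (2*n+3) : ℝ) :=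
          mul_le_mul_of_nonneg_right hchoose (by positivity)
      _ ≤ 2^(4*n+5) * (Nat.factorial n : ℝ) * (Nat.factorial (n+2) : ℝ) := hkey
  -- assemble
  have : u * (besselI1 u)^2 = ∑' n, u * (∑ kl ∈ Finset.HasAntidiagonal.antidiagonal n, bterm u kl.1 * bterm u kl.2) := by
    rw [sq, hcauchy, tsum_mul_left]
  rw [this, hexp]
  apply Summable.tsum_le_tsum_of_inj (fun n => 2*n+3)
  · intro a b hab; simp only at hab; omega
  · intro c _; positivity
  · exact hterm
  · exact hS.mul_left u
  · exact Real.summable_pow_div_factorial (2*u)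


lemma besselI1_le {u : ℝ} (hu : 0 < u) : besselI1 u ≤ Real.exp u / Real.sqrt u := by
  have h := besselI1_sq_le hu
  have hb := besselI1_nonneg hu.le
  have hsq : (Real.sqrt u * besselI1 u)^2 ≤ (Real.exp u)^2 := by
    rw [mul_pow, Real.sq_sqrt hu.le, ← Real.exp_nat_mul]
    calc u * besselI1 u ^ 2 ≤ Real.exp (2*u) := h
      _ = Real.exp ((2:ℕ) * u) := by norm_num
  have h2 : Real.sqrt u * besselI1 u ≤ Real.exp u := by
    nlinarith [hsq, Real.exp_pos u, mul_nonneg (Real.sqrt_nonneg u) hb]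
  have hs : 0 < Real.sqrt u := Real.sqrt_pos.mpr hu
  calc besselI1 u = Real.sqrt u * besselI1 u / Real.sqrt u := by field_simp
    _ ≤ Real.exp u / Real.sqrt u := by gcongr


lemma gauss_integrable {t r : ℝ} (ht : 0 < t) :
    Integrable (fun x : ℝ => Real.exp (-(x-r)^2/(2*t))) := by
  have h : ∀ x : ℝ, -(x-r)^2/(2*t) = -(1/(2*t)) * (x-r)^2 := by intro x; ring
  simp only [h]
  exact (integrable_exp_neg_mul_sq (by positivity)).comp_sub_right r

lemma gauss_mul_integrable {t r : ℝ} (ht : 0 < t) :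
    Integrable (fun x : ℝ => (x-r) * Real.exp (-(x-r)^2/(2*t))) := by
  have h : ∀ x : ℝ, -(x-r)^2/(2*t) = -(1/(2*t)) * (x-r)^2 := by intro x; ring
  simp only [h]
  exact (integrable_mul_exp_neg_mul_sq (by positivity)).comp_sub_right r

lemma gauss_ftc {t r lam : ℝ} (ht : 0 < t) :
    ∫ x in Ioi lam, (x-r) * Real.exp (-(x-r)^2/(2*t))
      = t * Real.exp (-(lam-r)^2/(2*t)) := by
  have hderiv : ∀ x ∈ Ioi lam,
      HasDerivAt (fun y : ℝ => -t * Real.exp (-(y-r)^2/(2*t)))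
        ((x-r) * Real.exp (-(x-r)^2/(2*t))) x := by
    intro x _
    have h1 : HasDerivAt (fun y : ℝ => -(y-r)^2/(2*t)) (-(x-r)/t) x := by
      have h0 : HasDerivAt (fun y : ℝ => y - r) 1 x := (hasDerivAt_id x).sub_const r
      have h2 := (h0.pow 2).neg.div_const (2*t)
      refine h2.congr_deriv ?_
      field_simp
      ring
    have := (h1.exp).const_mul (-t)
    refine this.congr_deriv ?_
    field_simp
  have hlim : Tendsto (fun y : ℝ => -t * Real.exp (-(y-r)^2/(2*t))) atTop (nhds 0) := by
    have h1 : Tendsto (fun y : ℝ => y - r) atTop atTop := tendsto_atTop_add_const_right _ _ tendsto_id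
    have h2 : Tendsto (fun y : ℝ => (y-r)^2) atTop atTop := by
      simpa [pow_two] using h1.atTop_mul_atTop₀ h1
    have h3 : Tendsto (fun y : ℝ => -(y-r)^2/(2*t)) atTop atBot := by
      apply Tendsto.atBot_div_const (by positivity)
      exact tendsto_neg_atTop_atBot.comp h2
    have h4 : Tendsto (fun y : ℝ => Real.exp (-(y-r)^2/(2*t))) atTop (nhds 0) :=
      Real.tendsto_exp_atBot.comp h3
    have := h4.const_mul (-t)
    simpa using this
  have hcont : ContinuousWithinAt (fun y : ℝ => -t * Real.exp (-(y-r)^2/(2*t))) (Ici lam) lam := by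
    apply Continuous.continuousWithinAt
    fun_prop
  have hint : IntegrableOn (fun x : ℝ => (x-r) * Real.exp (-(x-r)^2/(2*t))) (Ioi lam) :=
    (gauss_mul_integrable ht).integrableOn
  have := MeasureTheory.integral_Ioi_of_hasDerivAt_of_tendsto hcont hderiv hint hlim
  rw [this]
  ring

lemma gauss_tail {t r lam : ℝ} (ht : 0 < t) (hrl : r < lam) :
    ∫ x in Ioi lam, Real.exp (-(x-r)^2/(2*t))
      ≤ (t/(lam-r)) * Real.exp (-(lam-r)^2/(2*t)) := by
  have hlr : 0 < lam - r := by linarith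
  have hle : ∫ x in Ioi lam, Real.exp (-(x-r)^2/(2*t))
      ≤ ∫ x in Ioi lam, (1/(lam-r)) * ((x-r) * Real.exp (-(x-r)^2/(2*t))) := by
    apply integral_mono_of_nonneg
    · exact Filter.Eventually.of_forall (fun x => by positivity)
    · exact (((gauss_mul_integrable ht).const_mul _).integrableOn)
    · rw [Filter.EventuallyLE, ae_restrict_iff' measurableSet_Ioi]
      apply Filter.Eventually.of_forall
      intro x hx
      have hx' : lam < x := hx
      have h1 : 1 ≤ (x - r)/(lam - r) := by
        rw [le_div_iff₀ hlr]; linarith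
      calc Real.exp (-(x-r)^2/(2*t)) = 1 * Real.exp (-(x-r)^2/(2*t)) := by ring
        _ ≤ (x-r)/(lam-r) * Real.exp (-(x-r)^2/(2*t)) := by
            apply mul_le_mul_of_nonneg_right h1 (Real.exp_nonneg _)
        _ = (1/(lam-r)) * ((x-r) * Real.exp (-(x-r)^2/(2*t))) := by ring
  rw [integral_const_mul, gauss_ftc ht] at hle
  calc ∫ x in Ioi lam, Real.exp (-(x-r)^2/(2*t))
      ≤ 1/(lam-r) * (t * Real.exp (-(lam-r)^2/(2*t))) := hle
    _ = (t/(lam-r)) * Real.exp (-(lam-r)^2/(2*t)) := by ring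

/-- Tail bound for the zero-dimensional Bessel transition density: for every `a > 0` there is
`C > 0` such that for all `t > 0`, `λ ≥ at` and `1 < r < λ/2`,
`∫_λ^∞ (r/t) e^{−(r²+x²)/(2t)} I₁(rx/t) dx ≤ C √r e^{λr/t} (1/λ) e^{−λ²/(2t)}`. -/
theorem stmt_11 (a : ℝ) (ha : 0 < a) : ∃ C : ℝ, 0 < C ∧
    ∀ t lam r : ℝ, 0 < t → a * t ≤ lam → 1 < r → r < lam / 2 →
      (∫ x in Set.Ioi lam,
          (r / t) * Real.exp (-(r ^ 2 + x ^ 2) / (2 * t)) * besselI1 (r * x / t)) ≤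
        C * Real.sqrt r * Real.exp (lam * r / t) * (1 / lam) * Real.exp (-lam ^ 2 / (2 * t)) := by
  have hsa : 0 < Real.sqrt a := Real.sqrt_pos.mpr ha
  refine ⟨2 / Real.sqrt a, by positivity, ?_⟩
  intro t lam r ht hat hr1 hr2
  have hr0 : (0:ℝ) < r := by linarith
  have hlam : (0:ℝ) < lam := by linarith
  have hrl : r < lam := by linarith
  have hlr : (0:ℝ) < lam - r := by linarith
  -- pointwise bound on Ioi lam
  have hpt : ∀ x ∈ Ioi lam,
      (r / t) * Real.exp (-(r ^ 2 + x ^ 2) / (2 * t)) * besselI1 (r * x / t)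
        ≤ Real.sqrt (r/(t*lam)) * Real.exp (-(x-r)^2/(2*t)) := by
    intro x hx
    have hxl : lam < x := hx
    have hx0 : (0:ℝ) < x := lt_trans hlam hxl
    have hu : (0:ℝ) < r * x / t := by positivity
    have hsune : Real.sqrt (r*x/t) ≠ 0 := ne_of_gt (Real.sqrt_pos.mpr hu)
    have hsqrt_eq : (r/t) / Real.sqrt (r*x/t) = Real.sqrt (r/(t*x)) := by
      have e : r/(t*x) * (r*x/t) = (r/t)^2 := by field_simp
      have h2 : Real.sqrt (r/(t*x)) * Real.sqrt (r*x/t) = r/t := by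
        rw [← Real.sqrt_mul (by positivity) _, e, Real.sqrt_sq (by positivity)]
      rw [div_eq_iff hsune]
      exact h2.symm
    calc (r / t) * Real.exp (-(r ^ 2 + x ^ 2) / (2 * t)) * besselI1 (r * x / t)
        ≤ (r / t) * Real.exp (-(r ^ 2 + x ^ 2) / (2 * t)) * (Real.exp (r*x/t) / Real.sqrt (r*x/t)) := by
          apply mul_le_mul_of_nonneg_left (besselI1_le hu) (by positivity)
      _ = ((r/t) / Real.sqrt (r*x/t)) * (Real.exp (-(r ^ 2 + x ^ 2) / (2 * t)) * Real.exp (r*x/t)) := by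
          ring
      _ = Real.sqrt (r/(t*x)) * Real.exp (-(x-r)^2/(2*t)) := by
          rw [hsqrt_eq, ← Real.exp_add]
          congr 1
          field_simp
          ring
      _ ≤ Real.sqrt (r/(t*lam)) * Real.exp (-(x-r)^2/(2*t)) := by
          apply mul_le_mul_of_nonneg_right _ (Real.exp_nonneg _)
          apply Real.sqrt_le_sqrt
          gcongr
  -- integral comparison
  have hmono : (∫ x in Set.Ioi lam,
      (r / t) * Real.exp (-(r ^ 2 + x ^ 2) / (2 * t)) * besselI1 (r * x / t))
      ≤ ∫ x in Set.Ioi lam, Real.sqrt (r/(t*lam)) * Real.exp (-(x-r)^2/(2*t)) := by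
    apply integral_mono_of_nonneg
    · rw [Filter.EventuallyLE, ae_restrict_iff' measurableSet_Ioi]
      apply Filter.Eventually.of_forall
      intro x hx
      have hx0 : (0:ℝ) < x := lt_trans hlam hx
      have : (0:ℝ) ≤ r * x / t := by positivity
      have hb := besselI1_nonneg this
      positivity
    · exact ((gauss_integrable ht).const_mul _).integrableOn
    · rw [Filter.EventuallyLE, ae_restrict_iff' measurableSet_Ioi]
      exact Filter.Eventually.of_forall hpt
  have hgauss : (∫ x in Set.Ioi lam, Real.sqrt (r/(t*lam)) * Real.exp (-(x-r)^2/(2*t)))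
      ≤ Real.sqrt (r/(t*lam)) * ((t/(lam-r)) * Real.exp (-(lam-r)^2/(2*t))) := by
    rw [integral_const_mul]
    exact mul_le_mul_of_nonneg_left (gauss_tail ht hrl) (Real.sqrt_nonneg _)
  -- arithmetic on the bound
  have hA : Real.sqrt (r/(t*lam)) * (t/(lam-r)) ≤ 2 / Real.sqrt a * Real.sqrt r * (1/lam) := by
    have e1 : Real.sqrt (r/(t*lam)) * t = Real.sqrt (r*t/lam) := by
      rw [show r*t/lam = r/(t*lam) * t^2 from by field_simp,
        Real.sqrt_mul (by positivity), Real.sqrt_sq ht.le]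
    have e2 : Real.sqrt (r*t/lam) ≤ Real.sqrt r / Real.sqrt a := by
      rw [← Real.sqrt_div hr0.le]
      apply Real.sqrt_le_sqrt
      rw [div_le_div_iff₀ hlam ha]
      nlinarith [hat, hr0]
    have e3 : 1/(lam-r) ≤ 2/lam := by
      rw [div_le_div_iff₀ hlr hlam]; linarith
    calc Real.sqrt (r/(t*lam)) * (t/(lam-r))
        = Real.sqrt (r*t/lam) * (1/(lam-r)) := by rw [← e1]; ring
      _ ≤ (Real.sqrt r / Real.sqrt a) * (2/lam) :=
          mul_le_mul e2 e3 (by positivity) (by positivity)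
      _ = 2 / Real.sqrt a * Real.sqrt r * (1/lam) := by ring
  have hE : Real.exp (-(lam-r)^2/(2*t)) ≤ Real.exp (lam*r/t) * Real.exp (-lam^2/(2*t)) := by
    rw [← Real.exp_add]
    apply Real.exp_le_exp.mpr
    have hgap : lam*r/t + -lam^2/(2*t) - (-(lam-r)^2/(2*t)) = r^2/(2*t) := by
      field_simp; ring
    nlinarith [sq_nonneg r, mul_pos two_pos ht, div_nonneg (sq_nonneg r) (by positivity : (0:ℝ) ≤ 2*t)]
  calc (∫ x in Set.Ioi lam,
        (r / t) * Real.exp (-(r ^ 2 + x ^ 2) / (2 * t)) * besselI1 (r * x / t))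
      ≤ Real.sqrt (r/(t*lam)) * ((t/(lam-r)) * Real.exp (-(lam-r)^2/(2*t))) :=
        le_trans hmono hgauss
    _ = (Real.sqrt (r/(t*lam)) * (t/(lam-r))) * Real.exp (-(lam-r)^2/(2*t)) := by ring
    _ ≤ (2 / Real.sqrt a * Real.sqrt r * (1/lam)) * (Real.exp (lam*r/t) * Real.exp (-lam^2/(2*t))) := by
        apply mul_le_mul hA hE (Real.exp_nonneg _) (by positivity)
    _ = 2 / Real.sqrt a * Real.sqrt r * Real.exp (lam * r / t) * (1 / lam) * Real.exp (-lam ^ 2 / (2 * t)) := by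
        ring
end

section
/- Let I₁ denote the modified Bessel function of the first kind of order one, defined by the power series I₁(u) = ∑_{m=0}^∞ (1/(m!(m+1)!)) (u/2)^{2m+1}. Fix γ > 0, M > 0 and r > 0. Then, as t → ∞, √t · e^{−γ² t / 2} · (r/t) e^{−r²/(2t)} ∫_{γ t − M√t}^{γ t + M√t} e^{−x²/(2t) + γ x} I₁(r x / t) dx converges to r · I₁(γ r) · ∫_{−M}^{M} e^{−y²/2} dy. In other words, the truncated exponential moment E_r[e^{γ R_t} 1{|R_t − γt| ≤ M√t}] of the zero-dimensional Bessel process started at r is asymptotically equivalent to r I₁(γr) t^{−1/2} e^{γ² t/2} ∫_{−M}^M e^{−y²/2} dy. -/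
lemma besselI1_continuous : Continuous besselI1 := by
  rw [continuous_iff_continuousAt]
  intro u₀
  set R : ℝ := |u₀| + 1 with hRdef
  have hR0 : 0 < R := by positivity
  have hsum : Summable (fun m : ℕ =>
      (1 / ((Nat.factorial m : ℝ) * (Nat.factorial (m + 1) : ℝ))) * (R / 2) ^ (2 * m + 1)) := by
    have hbase : Summable (fun m : ℕ => ((R/2)^2) ^ m / (Nat.factorial m : ℝ)) :=
      Real.summable_pow_div_factorial ((R/2)^2)
    refine Summable.of_nonneg_of_le (fun m => by positivity) (fun m => ?_)
      (hbase.mul_left (R/2))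
    have hfac1 : (1:ℝ) ≤ (Nat.factorial m : ℝ) := by exact_mod_cast Nat.one_le_iff_ne_zero.mpr (Nat.factorial_ne_zero m)
    have hfac2 : (1:ℝ) ≤ (Nat.factorial (m+1) : ℝ) := by exact_mod_cast Nat.one_le_iff_ne_zero.mpr (Nat.factorial_ne_zero (m+1))
    have hpow : (R/2) ^ (2*m+1) = (R/2) * ((R/2)^2)^m := by
      rw [← pow_mul, pow_add, pow_one, mul_comm]
    rw [hpow]
    have h1 : (1:ℝ) / ((Nat.factorial m : ℝ) * (Nat.factorial (m+1) : ℝ)) ≤ ((Nat.factorial m : ℝ))⁻¹ := by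
      rw [one_div]
      apply inv_anti₀ (by positivity)
      nlinarith
    calc (1 / ((Nat.factorial m : ℝ) * (Nat.factorial (m+1) : ℝ))) * ((R/2) * ((R/2)^2)^m)
        ≤ ((Nat.factorial m : ℝ))⁻¹ * ((R/2) * ((R/2)^2)^m) :=
          mul_le_mul_of_nonneg_right h1 (by positivity)
      _ = R / 2 * ((((R / 2) ^ 2) ^ m) / (Nat.factorial m : ℝ)) := by ring
  have hcont : ContinuousOn besselI1 (Metric.ball (0:ℝ) R) := by
    apply continuousOn_tsum (fun m => by fun_prop) hsum
    intro m x hx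
    have hxR : |x| < R := by simpa [Real.dist_eq] using hx
    have h1 : |(1 / ((Nat.factorial m : ℝ) * (Nat.factorial (m + 1) : ℝ))) * (x / 2) ^ (2 * m + 1)|
        = (1 / ((Nat.factorial m : ℝ) * (Nat.factorial (m + 1) : ℝ))) * |x/2| ^ (2*m+1) := by
      rw [abs_mul, abs_pow, abs_of_nonneg (by positivity)]
    rw [Real.norm_eq_abs, h1]
    gcongr
    rw [abs_div, abs_two]
    gcongr
  exact hcont.continuousAt (Metric.isOpen_ball.mem_nhds (by simp [Real.dist_eq, hRdef]))

open Filter MeasureTheory intervalIntegral Real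

lemma arg_eq (γ r : ℝ) {t : ℝ} (ht : 0 < t) (y : ℝ) :
    r * (γ * t + Real.sqrt t * y) / t = γ * r + r * y / Real.sqrt t := by
  have hs0 : 0 < Real.sqrt t := Real.sqrt_pos.2 ht
  have hss : Real.sqrt t * Real.sqrt t = t := Real.mul_self_sqrt ht.le
  field_simp
  linear_combination (r * y) * hss

/-- Truncated exponential-moment asymptotics for the zero-dimensional Bessel process: for fixed
`γ > 0`, `M > 0`, `r > 0`, as `t → ∞`,
`√t e^{−γ²t/2} (r/t) e^{−r²/(2t)} ∫_{γt−M√t}^{γt+M√t} e^{−x²/(2t)+γx} I₁(rx/t) dx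
  → r I₁(γr) ∫_{−M}^{M} e^{−y²/2} dy`. -/
theorem stmt_14 (γ M r : ℝ) (hγ : 0 < γ) (hM : 0 < M) (hr : 0 < r) :
    Filter.Tendsto
      (fun t : ℝ =>
        Real.sqrt t * Real.exp (-(γ ^ 2) * t / 2) *
          ((r / t) * Real.exp (-r ^ 2 / (2 * t)) *
            ∫ x in (γ * t - M * Real.sqrt t)..(γ * t + M * Real.sqrt t),
              Real.exp (-x ^ 2 / (2 * t) + γ * x) * besselI1 (r * x / t)))
      Filter.atTop
      (nhds (r * besselI1 (γ * r) * ∫ y in (-M)..M, Real.exp (-y ^ 2 / 2))) := by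
  -- the reduced function after change of variables
  set F : ℝ → ℝ → ℝ := fun t y =>
    Real.exp (-y ^ 2 / 2) * besselI1 (r * (γ * t + Real.sqrt t * y) / t) with hF
  -- Step A: eventual equality
  have heq : ∀ t : ℝ, 0 < t →
      Real.sqrt t * Real.exp (-(γ ^ 2) * t / 2) *
          ((r / t) * Real.exp (-r ^ 2 / (2 * t)) *
            ∫ x in (γ * t - M * Real.sqrt t)..(γ * t + M * Real.sqrt t),
              Real.exp (-x ^ 2 / (2 * t) + γ * x) * besselI1 (r * x / t))
        = r * Real.exp (-r ^ 2 / (2 * t)) * ∫ y in (-M)..M, F t y := by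
    intro t ht
    have hs0 : 0 < Real.sqrt t := Real.sqrt_pos.2 ht
    have hss : Real.sqrt t * Real.sqrt t = t := Real.mul_self_sqrt ht.le
    set G : ℝ → ℝ := fun x => Real.exp (-x ^ 2 / (2 * t) + γ * x) * besselI1 (r * x / t) with hG
    have h1 : (Real.sqrt t) • (∫ y in (-M)..M, G (γ * t + Real.sqrt t * y))
        = ∫ x in (γ * t + Real.sqrt t * (-M))..(γ * t + Real.sqrt t * M), G x :=
      intervalIntegral.smul_integral_comp_add_mul G (Real.sqrt t) (γ * t)
    have hb1 : γ * t + Real.sqrt t * (-M) = γ * t - M * Real.sqrt t := by ring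
    have hb2 : γ * t + Real.sqrt t * M = γ * t + M * Real.sqrt t := by ring
    rw [hb1, hb2] at h1
    have h2 : ∀ y : ℝ, G (γ * t + Real.sqrt t * y) = Real.exp (γ ^ 2 * t / 2) * F t y := by
      intro y
      have hexp : -(γ * t + Real.sqrt t * y) ^ 2 / (2 * t) + γ * (γ * t + Real.sqrt t * y)
          = γ ^ 2 * t / 2 + -y ^ 2 / 2 := by
        field_simp
        nlinarith [hss]
      simp only [hG, hF]
      rw [hexp, Real.exp_add]
      ring
    have h3 : (∫ y in (-M)..M, G (γ * t + Real.sqrt t * y))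
        = Real.exp (γ ^ 2 * t / 2) * ∫ y in (-M)..M, F t y := by
      rw [intervalIntegral.integral_congr (fun y _ => h2 y)]
      exact intervalIntegral.integral_const_mul _ _
    rw [← h1, h3, smul_eq_mul]
    have hab : Real.exp (-(γ ^ 2) * t / 2) * Real.exp (γ ^ 2 * t / 2) = 1 := by
      rw [← Real.exp_add, show -(γ ^ 2) * t / 2 + γ ^ 2 * t / 2 = 0 by ring, Real.exp_zero]
    have : Real.sqrt t * Real.exp (-(γ ^ 2) * t / 2) *
        (r / t * Real.exp (-r ^ 2 / (2 * t)) *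
          (Real.sqrt t * (Real.exp (γ ^ 2 * t / 2) * ∫ y in (-M)..M, F t y)))
        = (Real.sqrt t * Real.sqrt t / t) *
          (Real.exp (-(γ ^ 2) * t / 2) * Real.exp (γ ^ 2 * t / 2)) *
          (r * Real.exp (-r ^ 2 / (2 * t)) * ∫ y in (-M)..M, F t y) := by ring
    rw [this, hss, div_self ht.ne', hab, one_mul, one_mul]
  -- Step B: the limit of the reduced expression
  have hexp1 : Tendsto (fun t : ℝ => Real.exp (-r ^ 2 / (2 * t))) atTop (nhds 1) := by
    have h0 : Tendsto (fun t : ℝ => -r ^ 2 / (2 * t)) atTop (nhds 0) :=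
      Tendsto.div_atTop tendsto_const_nhds (Tendsto.const_mul_atTop two_pos tendsto_id)
    simpa [Function.comp_def] using (Real.continuous_exp.tendsto 0).comp h0
  -- bound for besselI1 on the relevant compact set
  obtain ⟨C, hC⟩ : ∃ C, ∀ z ∈ Set.Icc (γ * r - r * M) (γ * r + r * M), ‖besselI1 z‖ ≤ C :=
    (isCompact_Icc.exists_bound_of_continuousOn besselI1_continuous.continuousOn)
  have hint : Tendsto (fun t : ℝ => ∫ y in (-M)..M, F t y) atTop
      (nhds (∫ y in (-M)..M, Real.exp (-y ^ 2 / 2) * besselI1 (γ * r))) := by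
    apply intervalIntegral.tendsto_integral_filter_of_dominated_convergence (fun _ => C)
    · filter_upwards [eventually_gt_atTop (0:ℝ)] with t ht
      apply Continuous.aestronglyMeasurable
      simp only [hF]
      exact Continuous.mul (by continuity) (besselI1_continuous.comp (by continuity))
    · filter_upwards [eventually_ge_atTop (1:ℝ)] with t ht
      have ht0 : (0:ℝ) < t := lt_of_lt_of_le one_pos ht
      have hs1 : (1:ℝ) ≤ Real.sqrt t := by
        rw [show (1:ℝ) = Real.sqrt 1 by simp]
        exact Real.sqrt_le_sqrt ht
      apply Filter.Eventually.of_forall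
      intro y hy
      have hyM : |y| ≤ M := by
        rcases Set.mem_uIoc.1 hy with h | h
        · have := h.1; have := h.2; rw [abs_le]; constructor <;> linarith
        · have := h.1; have := h.2; rw [abs_le]; constructor <;> linarith
      have harg : r * (γ * t + Real.sqrt t * y) / t ∈ Set.Icc (γ * r - r * M) (γ * r + r * M) := by
        rw [arg_eq γ r ht0 y]
        have hb : |r * y / Real.sqrt t| ≤ r * M := by
          rw [abs_div, abs_mul, abs_of_pos hr, abs_of_nonneg (Real.sqrt_nonneg t)]
          calc r * |y| / Real.sqrt t ≤ r * M / 1 := by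
                apply div_le_div₀ (by positivity) (by nlinarith) one_pos hs1
            _ = r * M := by ring
        rw [abs_le] at hb
        constructor <;> [linarith [hb.1]; linarith [hb.2]]
      have hbd := hC _ harg
      rw [hF]
      calc ‖Real.exp (-y ^ 2 / 2) * besselI1 (r * (γ * t + Real.sqrt t * y) / t)‖
          = Real.exp (-y ^ 2 / 2) * ‖besselI1 (r * (γ * t + Real.sqrt t * y) / t)‖ := by
            rw [norm_mul, Real.norm_eq_abs (Real.exp _), abs_of_pos (Real.exp_pos _)]
        _ ≤ 1 * C := by
            apply mul_le_mul _ hbd (norm_nonneg _) one_pos.le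
            exact Real.exp_le_one_iff.2 (by nlinarith [sq_nonneg y])
        _ = C := one_mul C
    · exact intervalIntegrable_const
    · apply Filter.Eventually.of_forall
      intro y
      have harg : Tendsto (fun t : ℝ => r * (γ * t + Real.sqrt t * y) / t) atTop (nhds (γ * r)) := by
        have h1 : Tendsto (fun t : ℝ => γ * r + r * y / Real.sqrt t) atTop (nhds (γ * r)) := by
          have hsqrt : Tendsto Real.sqrt atTop atTop :=
            (tendsto_rpow_atTop one_half_pos).congr fun t => (Real.sqrt_eq_rpow t).symm
          have h2 : Tendsto (fun t : ℝ => r * y / Real.sqrt t) atTop (nhds 0) :=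
            Tendsto.div_atTop tendsto_const_nhds hsqrt
          simpa using tendsto_const_nhds.add h2
        apply h1.congr'
        filter_upwards [eventually_gt_atTop (0:ℝ)] with t ht
        exact (arg_eq γ r ht y).symm
      intro _
      simp only [hF]
      exact tendsto_const_nhds.mul ((besselI1_continuous.tendsto _).comp harg)
  -- combine
  have hmain : Tendsto (fun t : ℝ => r * Real.exp (-r ^ 2 / (2 * t)) * ∫ y in (-M)..M, F t y)
      atTop (nhds (r * 1 * ∫ y in (-M)..M, Real.exp (-y ^ 2 / 2) * besselI1 (γ * r))) :=
    (tendsto_const_nhds.mul hexp1).mul hint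
  have hval : r * 1 * (∫ y in (-M)..M, Real.exp (-y ^ 2 / 2) * besselI1 (γ * r))
      = r * besselI1 (γ * r) * ∫ y in (-M)..M, Real.exp (-y ^ 2 / 2) := by
    rw [intervalIntegral.integral_mul_const]
    ring
  rw [← hval]
  apply hmain.congr'
  filter_upwards [eventually_gt_atTop (0:ℝ)] with t ht
  exact (heq t ht).symm
end

section
/- Fix γ > 0. Then, as θ → ∞, the ratio (∫_0^∞ exp(−t + γ√(2θt)) dt) / (γ √(2πθ) e^{γ² θ / 2}) converges to 1; that is, ∫_0^∞ e^{−t + γ√(2θt)} dt is asymptotically equivalent to γ√(2πθ) e^{γ²θ/2} as θ → ∞. -/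
open MeasureTheory Real Filter Set Topology

namespace Stmt16Aux

lemma expand (a u : ℝ) :
    Real.exp (-u ^ 2 / 2 + a * u) = Real.exp (a ^ 2 / 2) * Real.exp (-(u - a) ^ 2 / 2) := by
  rw [← Real.exp_add]; congr 1; ring

lemma int_gauss_shift (a : ℝ) :
    Integrable (fun u : ℝ => Real.exp (-(u - a) ^ 2 / 2)) := by
  have h : (fun u : ℝ => Real.exp (-(u - a) ^ 2 / 2))
      = fun u : ℝ => (fun v : ℝ => Real.exp (-(1 / 2) * v ^ 2)) (u - a) := by
    funext u; simp only; congr 1; ring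
  rw [h]
  exact (integrable_exp_neg_mul_sq (by norm_num)).comp_sub_right a

lemma int_mul_gauss_shift (a : ℝ) :
    Integrable (fun u : ℝ => (u - a) * Real.exp (-(u - a) ^ 2 / 2)) := by
  have h : (fun u : ℝ => (u - a) * Real.exp (-(u - a) ^ 2 / 2))
      = fun u : ℝ => (fun v : ℝ => v * Real.exp (-(1 / 2) * v ^ 2)) (u - a) := by
    funext u; simp only; congr 2; ring
  rw [h]
  exact (integrable_mul_exp_neg_mul_sq (by norm_num)).comp_sub_right a

lemma intE (a : ℝ) : Integrable (fun u : ℝ => Real.exp (-u ^ 2 / 2 + a * u)) :=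
  ((int_gauss_shift a).const_mul (Real.exp (a ^ 2 / 2))).congr
    (ae_of_all _ fun u => (expand a u).symm)

lemma intM (a : ℝ) : Integrable (fun u : ℝ => (u - a) * Real.exp (-u ^ 2 / 2 + a * u)) :=
  ((int_mul_gauss_shift a).const_mul (Real.exp (a ^ 2 / 2))).congr
    (ae_of_all _ fun u => by simp only; rw [expand]; ring)

lemma intU (a : ℝ) : Integrable (fun u : ℝ => u * Real.exp (-u ^ 2 / 2 + a * u)) :=
  ((intM a).add ((intE a).const_mul a)).congr
    (ae_of_all _ fun u => by simp only [Pi.add_apply]; ring)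

lemma intA (a : ℝ) :
    ∫ u in Ioi (0 : ℝ), (u - a) * Real.exp (-u ^ 2 / 2 + a * u) = 1 := by
  have hderiv : ∀ x ∈ Ioi (0 : ℝ),
      HasDerivAt (fun u : ℝ => -Real.exp (-u ^ 2 / 2 + a * u))
        ((x - a) * Real.exp (-x ^ 2 / 2 + a * x)) x := by
    intro x _
    have h1 : HasDerivAt (fun u : ℝ => -u ^ 2 / 2 + a * u) (-(2 * x ^ 1) / 2 + a * 1) x := by
      exact ((hasDerivAt_pow 2 x).neg.div_const 2).add ((hasDerivAt_id x).const_mul a)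
    have h2 : HasDerivAt (fun u : ℝ => -Real.exp (-u ^ 2 / 2 + a * u))
        (-(Real.exp (-x ^ 2 / 2 + a * x) * (-(2 * x ^ 1) / 2 + a * 1))) x := (h1.exp).neg
    convert h2 using 1
    simp only [pow_one]
    ring
  have htend : Tendsto (fun u : ℝ => -Real.exp (-u ^ 2 / 2 + a * u)) atTop (𝓝 0) := by
    have harg : Tendsto (fun u : ℝ => -u ^ 2 / 2 + a * u) atTop atBot := by
      have hle : (fun u : ℝ => -u ^ 2 / 2 + a * u) ≤ᶠ[atTop] fun u : ℝ => -u := by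
        filter_upwards [eventually_ge_atTop (max (2 * a + 2) 1)] with u hu
        have h1 : 2 * a + 2 ≤ u := le_trans (le_max_left _ _) hu
        have h2 : (1 : ℝ) ≤ u := le_trans (le_max_right _ _) hu
        nlinarith
      exact tendsto_atBot_mono' atTop hle tendsto_neg_atTop_atBot
    have := (Real.tendsto_exp_atBot.comp harg).neg
    simpa using this
  have h := integral_Ioi_of_hasDerivAt_of_tendsto
    (f := fun u : ℝ => -Real.exp (-u ^ 2 / 2 + a * u))
    (f' := fun u : ℝ => (u - a) * Real.exp (-u ^ 2 / 2 + a * u)) (a := 0) (m := 0)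
    (((Real.continuous_exp.comp (by continuity)).neg).continuousWithinAt) hderiv (intM a).integrableOn htend
  simpa using h

lemma intSplit (a : ℝ) :
    ∫ u in Ioi (0 : ℝ), u * Real.exp (-u ^ 2 / 2 + a * u)
      = 1 + a * ∫ u in Ioi (0 : ℝ), Real.exp (-u ^ 2 / 2 + a * u) := by
  calc ∫ u in Ioi (0 : ℝ), u * Real.exp (-u ^ 2 / 2 + a * u)
      = ∫ u in Ioi (0 : ℝ),
          ((u - a) * Real.exp (-u ^ 2 / 2 + a * u) + a * Real.exp (-u ^ 2 / 2 + a * u)) := by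
        congr 1; funext u; ring
    _ = (∫ u in Ioi (0 : ℝ), (u - a) * Real.exp (-u ^ 2 / 2 + a * u))
          + ∫ u in Ioi (0 : ℝ), a * Real.exp (-u ^ 2 / 2 + a * u) :=
        integral_add (intM a).integrableOn ((intE a).const_mul a).integrableOn
    _ = 1 + a * ∫ u in Ioi (0 : ℝ), Real.exp (-u ^ 2 / 2 + a * u) := by
        rw [intA, integral_const_mul]

lemma total (a : ℝ) : ∫ u : ℝ, Real.exp (-(u - a) ^ 2 / 2) = Real.sqrt (2 * π) := by
  have h : (fun u : ℝ => Real.exp (-(u - a) ^ 2 / 2))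
      = fun u : ℝ => (fun v : ℝ => Real.exp (-(1 / 2) * v ^ 2)) (u - a) := by
    funext u; simp only; congr 1; ring
  rw [h, integral_sub_right_eq_self (fun v : ℝ => Real.exp (-(1 / 2) * v ^ 2)) a,
    integral_gaussian]
  congr 1
  ring

lemma pull (a : ℝ) :
    ∫ u in Ioi (0 : ℝ), Real.exp (-u ^ 2 / 2 + a * u)
      = Real.exp (a ^ 2 / 2) * ∫ u in Ioi (0 : ℝ), Real.exp (-(u - a) ^ 2 / 2) := by
  simp_rw [expand a, integral_const_mul]

noncomputable def epsFn (a : ℝ) : ℝ := ∫ u in Iic (0 : ℝ), Real.exp (-(u - a) ^ 2 / 2)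

lemma split_line (a : ℝ) :
    ∫ u in Ioi (0 : ℝ), Real.exp (-(u - a) ^ 2 / 2) = Real.sqrt (2 * π) - epsFn a := by
  have h := intervalIntegral.integral_Iic_add_Ioi (b := (0 : ℝ)) (μ := volume)
    (int_gauss_shift a).integrableOn (int_gauss_shift a).integrableOn
  rw [total] at h
  rw [epsFn]; linarith

lemma eps_nonneg (a : ℝ) : 0 ≤ epsFn a :=
  setIntegral_nonneg measurableSet_Iic fun u _ => (Real.exp_pos _).le

lemma total0 : ∫ u : ℝ, Real.exp (-u ^ 2 / 2) = Real.sqrt (2 * π) := by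
  have := total 0
  simpa using this

lemma eps_bound (a : ℝ) (ha : 0 ≤ a) :
    epsFn a ≤ Real.sqrt (2 * π) * Real.exp (-a ^ 2 / 2) := by
  have hint0 : Integrable (fun u : ℝ => Real.exp (-u ^ 2 / 2)) := by
    simpa using int_gauss_shift 0
  calc epsFn a
      ≤ ∫ u in Iic (0 : ℝ), Real.exp (-a ^ 2 / 2) * Real.exp (-u ^ 2 / 2) := by
        refine setIntegral_mono_on (int_gauss_shift a).integrableOn
          ((hint0.const_mul _).integrableOn) measurableSet_Iic fun u hu => ?_
        rw [← Real.exp_add]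
        apply Real.exp_le_exp.2
        have hu0 : u ≤ 0 := hu
        nlinarith
    _ = Real.exp (-a ^ 2 / 2) * ∫ u in Iic (0 : ℝ), Real.exp (-u ^ 2 / 2) := by
        rw [integral_const_mul]
    _ ≤ Real.exp (-a ^ 2 / 2) * ∫ u : ℝ, Real.exp (-u ^ 2 / 2) := by
        gcongr
        exact ae_of_all _ fun u => (Real.exp_pos _).le
        exact Measure.restrict_le_self
    _ = Real.sqrt (2 * π) * Real.exp (-a ^ 2 / 2) := by rw [total0]; ring

lemma cov (γ θ : ℝ) (hθ : 0 < θ) :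
    ∫ t in Ioi (0 : ℝ), Real.exp (-t + γ * Real.sqrt (2 * θ * t))
      = ∫ u in Ioi (0 : ℝ), u * Real.exp (-u ^ 2 / 2 + (γ * Real.sqrt θ) * u) := by
  have himg : (fun u : ℝ => u ^ 2 / 2) '' Ioi 0 = Ioi 0 := by
    ext t
    constructor
    · rintro ⟨u, hu, rfl⟩
      exact div_pos (pow_pos (mem_Ioi.1 hu) 2) (by norm_num)
    · intro ht
      have ht0 : (0 : ℝ) < t := ht
      refine ⟨Real.sqrt (2 * t), Real.sqrt_pos.2 (by linarith), ?_⟩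
      show Real.sqrt (2 * t) ^ 2 / 2 = t
      rw [Real.sq_sqrt (by linarith : (0:ℝ) ≤ 2 * t)]; ring
  have hder : ∀ x ∈ Ioi (0 : ℝ), HasDerivWithinAt (fun u : ℝ => u ^ 2 / 2) x (Ioi 0) x := by
    intro x _
    have h : HasDerivAt (fun u : ℝ => u ^ 2 / 2) ((2 : ℕ) * x ^ 1 / 2) x :=
      (hasDerivAt_pow 2 x).div_const 2
    have h2 : HasDerivAt (fun u : ℝ => u ^ 2 / 2) x x := by
      convert h using 1; push_cast; ring
    exact h2.hasDerivWithinAt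
  have hinj : InjOn (fun u : ℝ => u ^ 2 / 2) (Ioi 0) := by
    intro u hu v hv h
    simp only at h
    nlinarith [mem_Ioi.1 hu, mem_Ioi.1 hv]
  calc ∫ t in Ioi (0 : ℝ), Real.exp (-t + γ * Real.sqrt (2 * θ * t))
      = ∫ t in (fun u : ℝ => u ^ 2 / 2) '' Ioi 0,
          Real.exp (-t + γ * Real.sqrt (2 * θ * t)) := by rw [himg]
    _ = ∫ u in Ioi (0 : ℝ),
          |u| • Real.exp (-(u ^ 2 / 2) + γ * Real.sqrt (2 * θ * (u ^ 2 / 2))) :=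
        integral_image_eq_integral_abs_deriv_smul measurableSet_Ioi hder hinj _
    _ = ∫ u in Ioi (0 : ℝ), u * Real.exp (-u ^ 2 / 2 + (γ * Real.sqrt θ) * u) := by
        refine setIntegral_congr_fun measurableSet_Ioi fun u hu => ?_
        have hu0 : 0 < u := hu
        have hs : Real.sqrt (2 * θ * (u ^ 2 / 2)) = Real.sqrt θ * u := by
          rw [show 2 * θ * (u ^ 2 / 2) = θ * u ^ 2 by ring, Real.sqrt_mul hθ.le,
            Real.sqrt_sq hu0.le]
        rw [smul_eq_mul, abs_of_pos hu0, hs]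
        congr 1
        exact congrArg Real.exp (by ring)

end Stmt16Aux

/-- For fixed `γ > 0`, `∫_0^∞ e^{−t+γ√(2θt)} dt ∼ γ√(2πθ) e^{γ²θ/2}` as `θ → ∞`. -/
theorem stmt_16 (γ : ℝ) (hγ : 0 < γ) :
    Filter.Tendsto
      (fun θ : ℝ =>
        (∫ t in Set.Ioi (0 : ℝ), Real.exp (-t + γ * Real.sqrt (2 * θ * t))) /
          (γ * Real.sqrt (2 * Real.pi * θ) * Real.exp (γ ^ 2 * θ / 2)))
      Filter.atTop (nhds 1) := by
  classical
  open Stmt16Aux in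
  set s : ℝ := Real.sqrt (2 * π) with hs
  have hs_pos : 0 < s := Real.sqrt_pos.2 (by positivity)
  -- the model function
  set G : ℝ → ℝ := fun a =>
    (1 + a * Real.exp (a ^ 2 / 2) * (s - epsFn a)) / (a * s * Real.exp (a ^ 2 / 2)) with hG
  -- limit of G
  have hsq : Tendsto (fun a : ℝ => a ^ 2 / 2) atTop atTop :=
    (tendsto_pow_atTop two_ne_zero).atTop_div_const two_pos
  have hexpTop : Tendsto (fun a : ℝ => Real.exp (a ^ 2 / 2)) atTop atTop :=
    Real.tendsto_exp_atTop.comp hsq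
  have hbig : Tendsto (fun a : ℝ => a * s * Real.exp (a ^ 2 / 2)) atTop atTop :=
    (tendsto_id.atTop_mul_const hs_pos).atTop_mul_atTop₀ hexpTop
  have h1 : Tendsto (fun a : ℝ => (a * s * Real.exp (a ^ 2 / 2))⁻¹) atTop (𝓝 0) :=
    hbig.inv_tendsto_atTop
  have heps : Tendsto epsFn atTop (𝓝 0) := by
    apply squeeze_zero' (eventually_atTop.2 ⟨0, fun a _ => eps_nonneg a⟩)
      (eventually_atTop.2 ⟨0, fun a ha => eps_bound a ha⟩)
    have : Tendsto (fun a : ℝ => Real.exp (-a ^ 2 / 2)) atTop (𝓝 0) := by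
      have harg : Tendsto (fun a : ℝ => -a ^ 2 / 2) atTop atBot := by
        have := (tendsto_neg_atTop_atBot.comp hsq)
        apply this.congr
        intro a; simp [neg_div]
      exact Real.tendsto_exp_atBot.comp harg
    have h2 := this.const_mul s
    rw [mul_zero] at h2
    exact h2
  have hGlim : Tendsto G atTop (𝓝 1) := by
    have hlim : Tendsto
        (fun a : ℝ => (a * s * Real.exp (a ^ 2 / 2))⁻¹ + (1 - epsFn a / s))
        atTop (𝓝 (0 + (1 - 0 / s))) :=
      h1.add (tendsto_const_nhds.sub (heps.div_const s))
    rw [show (0 : ℝ) + (1 - 0 / s) = 1 by simp] at hlim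
    apply hlim.congr'
    filter_upwards [eventually_gt_atTop (0 : ℝ)] with a ha
    have he : Real.exp (a ^ 2 / 2) ≠ 0 := (Real.exp_pos _).ne'
    rw [hG]
    field_simp
  -- composition with a = γ √θ
  have hsqrt : Tendsto Real.sqrt atTop atTop := by
    apply tendsto_atTop_atTop.2
    intro b
    refine ⟨max 0 (b ^ 2), fun x hx => ?_⟩
    have h1 : Real.sqrt (b ^ 2) ≤ Real.sqrt x :=
      Real.sqrt_le_sqrt (le_trans (le_max_right _ _) hx)
    rw [Real.sqrt_sq_eq_abs] at h1
    exact le_trans (le_abs_self b) h1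
  have haθ : Tendsto (fun θ : ℝ => γ * Real.sqrt θ) atTop atTop :=
    hsqrt.const_mul_atTop hγ
  refine (hGlim.comp haθ).congr' ?_
  filter_upwards [eventually_gt_atTop (0 : ℝ)] with θ hθ
  set a : ℝ := γ * Real.sqrt θ with ha
  have ha_pos : 0 < a := mul_pos hγ (Real.sqrt_pos.2 hθ)
  have hN : ∫ t in Ioi (0 : ℝ), Real.exp (-t + γ * Real.sqrt (2 * θ * t))
      = 1 + a * Real.exp (a ^ 2 / 2) * (s - epsFn a) := by
    rw [cov γ θ hθ, ← ha, intSplit, pull, split_line]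
    ring
  have hD : γ * Real.sqrt (2 * Real.pi * θ) * Real.exp (γ ^ 2 * θ / 2)
      = a * s * Real.exp (a ^ 2 / 2) := by
    have h2 : Real.sqrt (2 * Real.pi * θ) = s * Real.sqrt θ := Real.sqrt_mul (by positivity) θ
    have h3 : a ^ 2 = γ ^ 2 * θ := by
      rw [ha, mul_pow, Real.sq_sqrt hθ.le]
    rw [h2, h3.symm, ha]
    ring
  simp only [Function.comp_apply, hG]
  rw [hN, hD]
end

section
/- For every real ε > 0 and every complex number y with |y| = ε, the circle average of the logarithm of the distance satisfies ∫_0^{2π} log |y − ε e^{iθ}| dθ = 2π log ε. -/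
open MeasureTheory intervalIntegral Real Set

noncomputable section

namespace Stmt17Aux

/-- The basic singular function: `F θ = log |1 - e^{iθ}|`. -/
def F (θ : ℝ) : ℝ := Real.log ‖1 - Complex.exp (θ * Complex.I)‖

lemma abs_one_sub_exp (θ : ℝ) :
    ‖1 - Complex.exp (θ * Complex.I)‖ = 2 * |Real.sin (θ / 2)| := by
  have h1 : (1 - Complex.exp (θ * Complex.I)).re = 1 - Real.cos θ := by
    simp [Complex.exp_ofReal_mul_I_re]
  have h2 : (1 - Complex.exp (θ * Complex.I)).im = -Real.sin θ := by
    simp [Complex.exp_ofReal_mul_I_im]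
  have hns : Complex.normSq (1 - Complex.exp (θ * Complex.I)) = 4 * Real.sin (θ / 2) ^ 2 := by
    rw [Complex.normSq_apply, h1, h2]
    have hc : Real.cos θ = 1 - 2 * Real.sin (θ / 2) ^ 2 := by
      have h := Real.cos_two_mul (θ / 2)
      have h2' : 2 * (θ / 2) = θ := by ring
      have hsc := Real.sin_sq_add_cos_sq (θ / 2)
      rw [h2'] at h
      nlinarith
    have hs : Real.sin θ ^ 2 + Real.cos θ ^ 2 = 1 := Real.sin_sq_add_cos_sq θ
    nlinarith
  rw [Complex.norm_def, hns]
  have h4 : 4 * Real.sin (θ / 2) ^ 2 = (2 * |Real.sin (θ / 2)|) ^ 2 := by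
    rw [mul_pow, sq_abs]; ring
  rw [h4, Real.sqrt_sq (by positivity)]

lemma F_periodic : Function.Periodic F (2 * Real.pi) := by
  intro θ
  unfold F
  congr 3
  push_cast
  rw [add_mul, Complex.exp_add, Complex.exp_two_pi_mul_I, mul_one]

lemma F_measurable : Measurable F :=
  Real.measurable_log.comp ((continuous_norm.comp (by continuity)).measurable)

/-- `log` is interval integrable on `[0, 1]`. -/
lemma log_int01 : IntervalIntegrable Real.log volume 0 1 := by
  have h := intervalIntegral.intervalIntegrable_deriv_of_nonneg
    (g := fun x => x - x * Real.log x) (g' := fun x => -Real.log x)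
    (a := (0:ℝ)) (b := 1)
    (continuous_id.sub Real.continuous_mul_log).continuousOn
    (fun x hx => by
      rw [min_eq_left zero_le_one, max_eq_right zero_le_one] at hx
      have hx0 : x ≠ 0 := ne_of_gt hx.1
      have h' := (hasDerivAt_id x).sub (Real.hasDerivAt_mul_log hx0)
      exact h'.congr_deriv (by ring))
    (fun x hx => by
      rw [min_eq_left zero_le_one, max_eq_right zero_le_one] at hx
      have hl : Real.log x ≤ 0 := Real.log_nonpos hx.1.le hx.2.le
      show 0 ≤ -Real.log x
      linarith)
  have h2 := h.neg
  have he : (-fun x => -Real.log x) = Real.log := by funext x; simp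
  rwa [he] at h2

/-- `log` is interval integrable on `[0, b]` for any `b`. -/
lemma log_int {b : ℝ} (hb : 0 ≤ b) : IntervalIntegrable Real.log volume 0 b := by
  rcases le_total b 1 with hb1 | hb1
  · exact log_int01.mono_set (by
      rw [Set.uIcc_of_le hb, Set.uIcc_of_le zero_le_one]
      exact Set.Icc_subset_Icc le_rfl hb1)
  · exact log_int01.trans ((Real.continuousOn_log.mono (fun x hx => by
      rw [Set.uIcc_of_le hb1] at hx
      exact ne_of_gt (lt_of_lt_of_le zero_lt_one hx.1))).intervalIntegrable)

/-- `F` is interval integrable on `[0, π]`. -/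
lemma F_int_0_pi : IntervalIntegrable F volume 0 Real.pi := by
  have hπ : (0:ℝ) < Real.pi := Real.pi_pos
  -- dominating function
  have hdom : IntervalIntegrable (fun θ => |Real.log θ| + Real.log Real.pi) volume 0 Real.pi :=
    ((log_int hπ.le).abs).add intervalIntegrable_const
  refine hdom.mono_fun (F_measurable.aestronglyMeasurable) ?_
  rw [Filter.EventuallyLE, ae_restrict_iff' measurableSet_uIoc]
  refine Filter.Eventually.of_forall (fun θ hθ => ?_)
  rw [Set.uIoc_of_le hπ.le] at hθ
  obtain ⟨hθ0, hθπ⟩ := hθ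
  -- on (0, π], F θ = log (2 sin (θ/2)) with (2/π) θ ≤ 2 sin(θ/2) ≤ θ
  have hhalf0 : 0 ≤ θ / 2 := by linarith
  have hhalfπ : θ / 2 ≤ Real.pi / 2 := by linarith
  have hsin_pos : 0 < Real.sin (θ / 2) := by
    apply Real.sin_pos_of_pos_of_lt_pi (by linarith)
    linarith [Real.pi_pos]
  have habs : ‖1 - Complex.exp (θ * Complex.I)‖ = 2 * Real.sin (θ / 2) := by
    rw [abs_one_sub_exp, abs_of_pos hsin_pos]
  have hub : 2 * Real.sin (θ / 2) ≤ θ := by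
    have := Real.sin_le hhalf0
    linarith
  have hlb : 2 / Real.pi * θ ≤ 2 * Real.sin (θ / 2) := by
    have := Real.mul_le_sin hhalf0 hhalfπ
    have h2 : 2 / Real.pi * (θ / 2) ≤ Real.sin (θ / 2) := this
    calc 2 / Real.pi * θ = 2 * (2 / Real.pi * (θ / 2)) := by ring
    _ ≤ 2 * Real.sin (θ / 2) := by linarith
  have hlbpos : 0 < 2 / Real.pi * θ := by positivity
  -- log bounds
  have hFle : F θ ≤ Real.log θ := by
    rw [F.eq_def, habs]
    exact Real.log_le_log (by linarith) hub
  have hFge : Real.log θ - Real.log Real.pi ≤ F θ := by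
    rw [F.eq_def, habs]
    have := Real.log_le_log hlbpos hlb
    have heq : Real.log (2 / Real.pi * θ) = Real.log θ - Real.log (Real.pi / 2) := by
      rw [show 2 / Real.pi * θ = θ / (Real.pi / 2) by field_simp,
        Real.log_div (ne_of_gt hθ0) (by positivity)]
    have hle2 : Real.log (Real.pi / 2) ≤ Real.log Real.pi :=
      Real.log_le_log (by positivity) (by linarith)
    rw [heq] at this
    linarith
  have hlogπ : 0 ≤ Real.log Real.pi :=
    Real.log_nonneg (by linarith [Real.pi_gt_three])
  simp only [Real.norm_eq_abs]
  rw [abs_of_nonneg (by positivity : (0:ℝ) ≤ |Real.log θ| + Real.log Real.pi)]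
  rw [abs_le]
  constructor
  · have : -|Real.log θ| ≤ Real.log θ := neg_abs_le _
    linarith
  · have : Real.log θ ≤ |Real.log θ| := le_abs_self _
    linarith

/-- Reflection symmetry: `F (2π − θ) = F θ`. -/
lemma F_reflect (θ : ℝ) : F (2 * Real.pi - θ) = F θ := by
  unfold F
  rw [abs_one_sub_exp, abs_one_sub_exp]
  congr 1
  rw [show (2 * Real.pi - θ) / 2 = Real.pi - θ / 2 by ring, Real.sin_pi_sub]

/-- `F` is interval integrable on `[π, 2π]`. -/
lemma F_int_pi_2pi : IntervalIntegrable F volume Real.pi (2 * Real.pi) := by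
  have h := F_int_0_pi.comp_sub_left (2 * Real.pi)
  simp only [F_reflect] at h
  have h' : IntervalIntegrable F volume (2 * Real.pi - 0) (2 * Real.pi - Real.pi) := h
  rw [show 2 * Real.pi - 0 = 2 * Real.pi by ring,
    show 2 * Real.pi - Real.pi = Real.pi by ring] at h'
  exact h'.symm

lemma F_int_0_2pi : IntervalIntegrable F volume 0 (2 * Real.pi) :=
  F_int_0_pi.trans F_int_pi_2pi

/-- `F` is interval integrable on any interval. -/
lemma F_int (a b : ℝ) : IntervalIntegrable F volume a b := by
  have hT : (0:ℝ) < 2 * Real.pi := by positivity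
  -- integrable on [0, n*(2π)] for all n
  have hn : ∀ n : ℕ, IntervalIntegrable F volume 0 (n * (2 * Real.pi)) := by
    intro n
    induction n with
    | zero => simp
    | succ n ih =>
      refine ih.trans ?_
      have h := F_int_0_2pi.comp_sub_right (n * (2 * Real.pi))
      have heq : (fun x => F (x - n * (2 * Real.pi))) = F := by
        funext x
        exact (F_periodic.sub_nat_mul_eq n)
      rw [heq, zero_add] at h
      have e : ((n + 1 : ℕ) : ℝ) * (2 * Real.pi) = 2 * Real.pi + n * (2 * Real.pi) := by
        push_cast; ring
      rw [e]
      exact h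
  -- integrable on [-(n*2π), n*2π]
  have hsym : ∀ n : ℕ, IntervalIntegrable F volume (-(n * (2 * Real.pi))) (n * (2 * Real.pi)) := by
    intro n
    have h := (hn (2 * n)).comp_add_right (n * (2 * Real.pi))
    have heq : (fun x => F (x + n * (2 * Real.pi))) = F := by
      funext x
      exact (F_periodic.nat_mul n) x
    rw [heq] at h
    have e1 : (0:ℝ) - n * (2 * Real.pi) = -(n * (2 * Real.pi)) := by ring
    have e2 : ((2 * n : ℕ) : ℝ) * (2 * Real.pi) - n * (2 * Real.pi) = n * (2 * Real.pi) := by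
      push_cast; ring
    rw [e1, e2] at h
    exact h
  obtain ⟨n, hnn⟩ := exists_nat_ge ((max |a| |b|) / (2 * Real.pi))
  have hbound : max |a| |b| ≤ n * (2 * Real.pi) := by
    rw [div_le_iff₀ hT] at hnn
    linarith
  refine (hsym n).mono_set ?_
  have hsub : Set.uIcc a b ⊆ Set.Icc (-(n * (2 * Real.pi))) (n * (2 * Real.pi)) := by
    intro x hx
    have h1 : -(n * (2 * Real.pi)) ≤ min a b := by
      have := neg_abs_le a
      have := neg_abs_le b
      have ha' : |a| ≤ max |a| |b| := le_max_left _ _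
      have hb' : |b| ≤ max |a| |b| := le_max_right _ _
      rcases min_cases a b with ⟨h, _⟩ | ⟨h, _⟩ <;> rw [h] <;> linarith
    have h2 : max a b ≤ n * (2 * Real.pi) := by
      have := le_abs_self a
      have := le_abs_self b
      have ha' : |a| ≤ max |a| |b| := le_max_left _ _
      have hb' : |b| ≤ max |a| |b| := le_max_right _ _
      rcases max_cases a b with ⟨h, _⟩ | ⟨h, _⟩ <;> rw [h] <;> linarith
    rw [Set.uIcc] at hx
    exact ⟨le_trans h1 hx.1, le_trans hx.2 h2⟩
  rw [Set.uIcc_of_le (by linarith [le_trans (neg_nonpos_of_nonneg (by positivity :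
    (0:ℝ) ≤ n * (2 * Real.pi))) (by positivity : (0:ℝ) ≤ n * (2 * Real.pi))] :
    -(n * (2 * Real.pi)) ≤ n * (2 * Real.pi))]
  exact hsub

/-- The set where `sin` vanishes is countable. -/
lemma countable_sin_zero : Set.Countable {θ : ℝ | Real.sin θ = 0} := by
  have : {θ : ℝ | Real.sin θ = 0} ⊆ Set.range (fun n : ℤ => (n : ℝ) * Real.pi) := by
    intro θ hθ
    obtain ⟨n, hn⟩ := Real.sin_eq_zero_iff.mp hθ
    exact ⟨n, hn⟩
  exact (Set.countable_range _).mono this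

/-- Almost everywhere, `sin θ ≠ 0`. -/
lemma ae_sin_ne_zero : ∀ᵐ θ : ℝ, Real.sin θ ≠ 0 := by
  have := countable_sin_zero.measure_zero (volume : Measure ℝ)
  rw [ae_iff]
  convert this using 2
  ext θ
  simp

/-- The key doubling identity, a.e.: `F (2θ) = F θ + F (θ + π)`. -/
lemma F_double (θ : ℝ) (hθ : Real.sin θ ≠ 0) : F (2 * θ) = F θ + F (θ + Real.pi) := by
  have key : (1 : ℂ) - Complex.exp ((2 * θ : ℝ) * Complex.I) =
      (1 - Complex.exp (θ * Complex.I)) * (1 - Complex.exp ((θ + Real.pi : ℝ) * Complex.I)) := by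
    have h1 : Complex.exp ((2 * θ : ℝ) * Complex.I) = Complex.exp (θ * Complex.I) ^ 2 := by
      rw [← Complex.exp_nat_mul]
      congr 1
      push_cast; ring
    have h2 : Complex.exp ((θ + Real.pi : ℝ) * Complex.I) = -Complex.exp (θ * Complex.I) := by
      push_cast
      rw [add_mul, Complex.exp_add, Complex.exp_pi_mul_I, mul_neg_one]
    rw [h1, h2]
    ring
  have hne1 : ‖1 - Complex.exp (θ * Complex.I)‖ ≠ 0 := by
    rw [abs_one_sub_exp]
    intro h
    have : |Real.sin (θ / 2)| = 0 := by linarith [abs_nonneg (Real.sin (θ / 2))]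
    have hs : Real.sin (θ / 2) = 0 := abs_eq_zero.mp this
    apply hθ
    have : θ = 2 * (θ / 2) := by ring
    rw [this, Real.sin_two_mul, hs]
    ring
  have hne2 : ‖1 - Complex.exp ((θ + Real.pi : ℝ) * Complex.I)‖ ≠ 0 := by
    rw [abs_one_sub_exp]
    intro h
    have : |Real.sin ((θ + Real.pi) / 2)| = 0 := by
      linarith [abs_nonneg (Real.sin ((θ + Real.pi) / 2))]
    have hs : Real.sin ((θ + Real.pi) / 2) = 0 := abs_eq_zero.mp this
    apply hθ
    have heq : (θ + Real.pi) / 2 = θ / 2 + Real.pi / 2 := by ring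
    rw [heq, Real.sin_add, Real.sin_pi_div_two, Real.cos_pi_div_two] at hs
    have hc : Real.cos (θ / 2) = 0 := by linarith [hs]
    have : θ = 2 * (θ / 2) := by ring
    rw [this, Real.sin_two_mul, hc]
    ring
  unfold F
  rw [key, norm_mul, Real.log_mul hne1 hne2]

/-- The integral of `F` over a full period vanishes. -/
lemma integral_F_zero : ∫ θ in (0:ℝ)..(2 * Real.pi), F θ = 0 := by
  set J := ∫ θ in (0:ℝ)..(2 * Real.pi), F θ with hJ
  have hT : (0:ℝ) < 2 * Real.pi := by positivity
  -- LHS computation: ∫₀^{2π} F(2θ) dθ = J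
  have hA : (∫ θ in (0:ℝ)..(2 * Real.pi), F (2 * θ)) = J := by
    rw [intervalIntegral.integral_comp_mul_left F (two_ne_zero)]
    have e1 : (2:ℝ) * 0 = 0 := by ring
    have e2 : (2:ℝ) * (2 * Real.pi) = 2 * Real.pi + 2 * Real.pi := by ring
    rw [e1, e2]
    rw [← intervalIntegral.integral_add_adjacent_intervals (F_int 0 (2 * Real.pi))
      (F_int (2 * Real.pi) (2 * Real.pi + 2 * Real.pi))]
    rw [F_periodic.intervalIntegral_add_eq (2 * Real.pi) 0, zero_add]
    rw [← hJ]
    rw [smul_eq_mul]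
    ring
  -- RHS computation: ∫₀^{2π} F(2θ) dθ = 2J
  have hB : (∫ θ in (0:ℝ)..(2 * Real.pi), F (2 * θ)) = 2 * J := by
    have hcong : (∫ θ in (0:ℝ)..(2 * Real.pi), F (2 * θ)) =
        ∫ θ in (0:ℝ)..(2 * Real.pi), (F θ + F (θ + Real.pi)) := by
      apply intervalIntegral.integral_congr_ae
      filter_upwards [ae_sin_ne_zero] with θ hθ _
      exact F_double θ hθ
    rw [hcong]
    have hint2 : IntervalIntegrable (fun θ => F (θ + Real.pi)) volume 0 (2 * Real.pi) := by
      have h := (F_int Real.pi (3 * Real.pi)).comp_add_right Real.pi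
      have e1 : Real.pi - Real.pi = 0 := by ring
      have e2 : 3 * Real.pi - Real.pi = 2 * Real.pi := by ring
      rw [e1, e2] at h
      exact h
    rw [intervalIntegral.integral_add (F_int 0 (2 * Real.pi)) hint2]
    have hshift : (∫ θ in (0:ℝ)..(2 * Real.pi), F (θ + Real.pi)) = J := by
      have h := intervalIntegral.integral_comp_add_right (a := (0:ℝ)) (b := 2 * Real.pi) F Real.pi
      rw [h, zero_add]
      have e : 2 * Real.pi + Real.pi = Real.pi + 2 * Real.pi := by ring
      rw [e, F_periodic.intervalIntegral_add_eq Real.pi 0, zero_add, ← hJ]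
    rw [hshift, ← hJ]
    ring
  linarith [hA.symm.trans hB]

end Stmt17Aux

end

open Stmt17Aux MeasureTheory

/-- Circle average of the log-distance: for `ε > 0` and `|y| = ε`,
`∫_0^{2π} log|y − ε e^{iθ}| dθ = 2π log ε`. -/
theorem stmt_17 (ε : ℝ) (hε : 0 < ε) (y : ℂ) (hy : ‖y‖ = ε) :
    (∫ θ in (0 : ℝ)..(2 * Real.pi),
        Real.log ‖y - (ε : ℂ) * Complex.exp (θ * Complex.I)‖) =
      2 * Real.pi * Real.log ε := by
  set α := Complex.arg y with hα
  have hy' : y = (ε : ℂ) * Complex.exp ((α : ℂ) * Complex.I) := by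
    rw [hα, ← hy]
    exact (Complex.norm_mul_exp_arg_mul_I y).symm
  -- pointwise factorization |y - ε e^{iθ}| = ε * |1 - e^{i(θ-α)}|
  have hfact : ∀ θ : ℝ, ‖y - (ε : ℂ) * Complex.exp (θ * Complex.I)‖ =
      ε * ‖1 - Complex.exp (((θ - α : ℝ) : ℂ) * Complex.I)‖ := by
    intro θ
    rw [hy']
    have key : (ε : ℂ) * Complex.exp ((α : ℂ) * Complex.I) -
        (ε : ℂ) * Complex.exp ((θ : ℂ) * Complex.I) =
        (ε : ℂ) * Complex.exp ((α : ℂ) * Complex.I) *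
          (1 - Complex.exp (((θ - α : ℝ) : ℂ) * Complex.I)) := by
      have : Complex.exp (((θ - α : ℝ) : ℂ) * Complex.I) =
          Complex.exp ((θ : ℂ) * Complex.I) * (Complex.exp ((α : ℂ) * Complex.I))⁻¹ := by
        rw [← Complex.exp_neg, ← Complex.exp_add]
        congr 1
        push_cast
        ring
      rw [this]
      have hz := Complex.exp_ne_zero ((α : ℂ) * Complex.I)
      field_simp
    rw [key, norm_mul, norm_mul, Complex.norm_exp_ofReal_mul_I, Complex.norm_of_nonneg hε.le,
      mul_one]
  -- a.e. the log splits
  have hae : ∀ᵐ θ : ℝ, Real.sin ((θ - α) / 2) ≠ 0 := by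
    have hc : Set.Countable {θ : ℝ | Real.sin ((θ - α) / 2) = 0} := by
      have hsub : {θ : ℝ | Real.sin ((θ - α) / 2) = 0} ⊆
          Set.range (fun n : ℤ => (n : ℝ) * Real.pi * 2 + α) := by
        intro θ hθ
        obtain ⟨n, hn⟩ := Real.sin_eq_zero_iff.mp hθ
        exact ⟨n, by dsimp; linarith⟩
      exact (Set.countable_range _).mono hsub
    have := hc.measure_zero (volume : Measure ℝ)
    rw [ae_iff]
    convert this using 2
    ext θ
    simp
  have hcong : (∫ θ in (0 : ℝ)..(2 * Real.pi),
        Real.log ‖y - (ε : ℂ) * Complex.exp (θ * Complex.I)‖) =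
      ∫ θ in (0 : ℝ)..(2 * Real.pi), (Real.log ε + F (θ - α)) := by
    apply intervalIntegral.integral_congr_ae
    filter_upwards [hae] with θ hθ _
    rw [hfact θ]
    have hne : ‖1 - Complex.exp (((θ - α : ℝ) : ℂ) * Complex.I)‖ ≠ 0 := by
      rw [abs_one_sub_exp]
      intro h
      have : |Real.sin ((θ - α) / 2)| = 0 := by
        linarith [abs_nonneg (Real.sin ((θ - α) / 2))]
      exact hθ (abs_eq_zero.mp this)
    rw [Real.log_mul (ne_of_gt hε) hne]
    rfl
  rw [hcong]
  have hintF : IntervalIntegrable (fun θ => F (θ - α)) volume 0 (2 * Real.pi) := by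
    have h := (F_int (-α) (2 * Real.pi - α)).comp_sub_right α
    have e1 : -α + α = 0 := by ring
    have e2 : 2 * Real.pi - α + α = 2 * Real.pi := by ring
    rw [e1, e2] at h
    exact h
  rw [intervalIntegral.integral_add intervalIntegrable_const hintF]
  have hshift : (∫ θ in (0 : ℝ)..(2 * Real.pi), F (θ - α)) = 0 := by
    rw [intervalIntegral.integral_comp_sub_right F α, zero_sub]
    have e : 2 * Real.pi - α = -α + 2 * Real.pi := by ring
    rw [e, F_periodic.intervalIntegral_add_eq (-α) 0, zero_add]
    exact integral_F_zero
  rw [hshift, add_zero, intervalIntegral.integral_const, smul_eq_mul]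
  ring
end
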